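/- arXiv:1310.4760 — 14 statements merged into one kernel-verified Lean document; each statement's English description precedes it below -/
import Mathlib

section
/- A complex N×N matrix A is invertible with ‖A⁻¹‖ ≤ κ if and only if A + B is invertible for every matrix B with ‖B‖ < κ⁻¹. -/
/-!
If `‖A⁻¹‖ ≤ κ` and `‖B‖ < κ⁻¹`, then `A + B = A (1 + A⁻¹B)` with `‖A⁻¹B‖ < 1`, so `A + B` is
invertible by the Neumann series. Conversely, if `‖A⁻¹x‖ > κ‖x‖` for some `x`, put `u = A⁻¹x`:
a rank-one operator `B` (built from a Hahn–Banach functional norming `u`) with `Bu = -x` has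
`‖B‖ = ‖x‖ / ‖u‖ < κ⁻¹`, yet `(A + B)u = 0`, so `A + B` is not invertible.
-/

theorem IsUnit.add_of_norm_inverse_mul_norm_lt_one {R : Type*} [NormedRing R] [CompleteSpace R]
    {a : R} (ha : IsUnit a) {b : R} (h : ‖Ring.inverse a‖ * ‖b‖ < 1) : IsUnit (a + b) := by
  have hab : a + b = a * (1 - -(Ring.inverse a * b)) := by
    rw [sub_neg_eq_add, mul_add, mul_one, ← mul_assoc, Ring.mul_inverse_cancel a ha, one_mul]
  rw [hab]
  refine ha.mul (isUnit_one_sub_of_norm_lt_one ?_)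
  rw [norm_neg]
  exact (norm_mul_le _ _).trans_lt h

namespace ContinuousLinearMap

variable {𝕜 E F : Type*} [RCLike 𝕜] [NormedAddCommGroup E] [NormedSpace 𝕜 E]
  [NormedAddCommGroup F] [NormedSpace 𝕜 F]

theorem exists_apply_eq_and_norm_eq_div {u : E} (hu : u ≠ 0) (y : F) :
    ∃ B : E →L[𝕜] F, B u = y ∧ ‖B‖ = ‖y‖ / ‖u‖ := by
  obtain ⟨g, hg, hgu⟩ := exists_dual_vector 𝕜 u (norm_ne_zero_iff.2 hu)
  refine ⟨((‖u‖⁻¹ : 𝕜) • g).smulRight y, ?_, ?_⟩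
  · simp [hgu, hu]
  · rw [norm_smulRight_apply, norm_smul, hg]
    simp [div_eq_inv_mul]

theorem apply_ne_zero_of_isUnit {T : E →L[𝕜] E} (hT : IsUnit T) {u : E} (hu : u ≠ 0) :
    T u ≠ 0 := by
  have hinj : Function.Injective T :=
    ((Module.End.isUnit_iff _).1 (hT.map toLinearMapRingHom)).injective
  exact fun h => hu (hinj (h.trans (map_zero T).symm))

theorem norm_le_mul_norm_apply_of_forall_isUnit_add {A : E →L[𝕜] E} {κ : ℝ} (hκ : 0 < κ)
    (h : ∀ B : E →L[𝕜] E, ‖B‖ < κ⁻¹ → IsUnit (A + B)) (u : E) : ‖u‖ ≤ κ * ‖A u‖ := by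
  rcases eq_or_ne u 0 with rfl | hu
  · simp
  by_contra! hlt
  obtain ⟨B, hBu, hB⟩ := exists_apply_eq_and_norm_eq_div (𝕜 := 𝕜) hu (-A u)
  have hB_lt : ‖B‖ < κ⁻¹ := by
    rwa [hB, norm_neg, div_lt_iff₀ (norm_pos_iff.2 hu), inv_mul_eq_div, lt_div_iff₀' hκ]
  exact apply_ne_zero_of_isUnit (h B hB_lt) hu (by simp [hBu])

theorem isUnit_and_norm_inverse_le_of_forall_isUnit_add {A : E →L[𝕜] E} {κ : ℝ} (hκ : 0 < κ)
    (h : ∀ B : E →L[𝕜] E, ‖B‖ < κ⁻¹ → IsUnit (A + B)) :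
    IsUnit A ∧ ‖Ring.inverse A‖ ≤ κ := by
  have hA : IsUnit A := by simpa using h 0 (by simpa using hκ)
  refine ⟨hA, opNorm_le_bound _ hκ.le fun x => ?_⟩
  have hAx : A (Ring.inverse A x) = x := by
    change (A * Ring.inverse A) x = x
    rw [Ring.mul_inverse_cancel A hA]
    rfl
  simpa [hAx] using norm_le_mul_norm_apply_of_forall_isUnit_add hκ h (Ring.inverse A x)

end ContinuousLinearMap

/-- A complex N×N matrix (as an operator on ℂᴺ) is invertible with ‖A⁻¹‖ ≤ κ iff
A + B is invertible for every B with ‖B‖ < κ⁻¹. -/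
theorem stmt_0 (N : ℕ) (A : EuclideanSpace ℂ (Fin N) →L[ℂ] EuclideanSpace ℂ (Fin N))
    (κ : ℝ) (hκ : 0 < κ) :
    (IsUnit A ∧ ‖Ring.inverse A‖ ≤ κ) ↔
      ∀ B : EuclideanSpace ℂ (Fin N) →L[ℂ] EuclideanSpace ℂ (Fin N),
        ‖B‖ < κ⁻¹ → IsUnit (A + B) := by
  refine ⟨fun ⟨hA, hA_inv⟩ B hB => hA.add_of_norm_inverse_mul_norm_lt_one ?_,
    ContinuousLinearMap.isUnit_and_norm_inverse_le_of_forall_isUnit_add hκ⟩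
  calc ‖Ring.inverse A‖ * ‖B‖ ≤ κ * ‖B‖ := by gcongr
    _ < κ * κ⁻¹ := by gcongr
    _ = 1 := mul_inv_cancel₀ hκ.ne'
end

section
/- If a square matrix A satisfies ‖exp(itA)‖ ≤ C for all real t, then every eigenvalue of A is real. -/
/-! By the spectral mapping property of the exponential, `exp (i t μ)` lies in the spectrum of
`exp (i t A)` for every eigenvalue `μ` of `A`, so `‖exp (i t μ)‖ = e ^ (-t Im μ)` is bounded by
`‖exp (i t A)‖ ≤ C` for all real `t`; this forces `Im μ = 0`. -/

theorem Real.eq_zero_of_forall_exp_mul_le {x C : ℝ} (h : ∀ t : ℝ, Real.exp (t * x) ≤ C) :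
    x = 0 := by
  by_contra hx
  have := h (C / x)
  rw [div_mul_cancel₀ C hx] at this
  linarith [Real.add_one_le_exp C]

theorem Complex.norm_exp_ofReal_mul_I_mul (t : ℝ) (μ : ℂ) :
    ‖Complex.exp ((t : ℂ) * Complex.I * μ)‖ = Real.exp (t * -μ.im) := by
  simp [Complex.norm_exp]

theorem spectrum.im_eq_zero_of_forall_norm_exp_le {𝔸 : Type*} [NormedRing 𝔸]
    [NormedAlgebra ℂ 𝔸] [CompleteSpace 𝔸] [NormOneClass 𝔸] {a : 𝔸} {C : ℝ}
    (h : ∀ t : ℝ, ‖NormedSpace.exp ((t : ℂ) • Complex.I • a)‖ ≤ C) {μ : ℂ}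
    (hμ : μ ∈ spectrum ℂ a) : μ.im = 0 := by
  have : Nontrivial 𝔸 := NormOneClass.nontrivial
  have hbound (t : ℝ) : Real.exp (t * -μ.im) ≤ C := by
    have hmem : (t : ℂ) * Complex.I * μ ∈ spectrum ℂ ((t : ℂ) • Complex.I • a) := by
      rw [smul_smul, spectrum.smul_eq_smul _ _ ⟨μ, hμ⟩]
      exact Set.smul_mem_smul_set hμ
    rw [← Complex.norm_exp_ofReal_mul_I_mul, Complex.exp_eq_exp_ℂ]
    exact (spectrum.norm_le_norm_of_mem (spectrum.exp_mem_exp _ hmem)).trans (h t)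
  simpa using Real.eq_zero_of_forall_exp_mul_le hbound

/-- If ‖exp(itA)‖ ≤ C for all real t, then every eigenvalue of A is real. -/
theorem stmt_2 (N : ℕ) (A : EuclideanSpace ℂ (Fin N) →L[ℂ] EuclideanSpace ℂ (Fin N))
    (C : ℝ)
    (h : ∀ t : ℝ, ‖NormedSpace.exp ((t : ℂ) • Complex.I • A)‖ ≤ C) :
    ∀ μ : ℂ,
      Module.End.HasEigenvalue
        (A : EuclideanSpace ℂ (Fin N) →ₗ[ℂ] EuclideanSpace ℂ (Fin N)) μ → μ.im = 0 := by
  intro μ hμ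
  obtain ⟨v, hv⟩ := hμ.exists_hasEigenvector
  have : Nontrivial (EuclideanSpace ℂ (Fin N)) := ⟨⟨v, 0, hv.2⟩⟩
  refine spectrum.im_eq_zero_of_forall_norm_exp_le (a := A) h ?_
  rw [ContinuousLinearMap.spectrum_eq]
  exact hμ.mem_spectrum
end

section
/- If ‖exp(itA)‖ ≤ C for all t ∈ ℝ, then all eigenvalues of A are real and semi-simple, and each spectral projector Π satisfies ‖Π‖ ≤ C. -/
/-!
On an eigenvector for `μ`, `exp (t • I • A)` acts as the scalar `e^{itμ}` of modulus `e^{-t Im μ}`;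
since this stays bounded for all real `t`, `μ` is real. Then `|e^{-itμ}| = 1`, so the semigroup
generated by `B = I • (A - μ)` is still bounded by `C`, and the argument is the mean ergodic
theorem for it: the Cesàro means `T⁻¹ ∫₀ᵀ exp (t • B) dt` have norm at most `C`, fix `ker B`, and
tend to `0` on `range B` because `∫₀ᵀ exp (t • B) * B dt = exp (T • B) - 1` stays bounded.
A vector of `ker B ⊓ range B` is therefore its own limit `0`, and the projection onto `ker B`
along `range B` is the pointwise limit of the means, whence its norm is at most `C`.
-/

open Filter Topology NormedSpace

section ExpOfRealSmul

variable {𝔸 : Type*} [NormedRing 𝔸] [NormedAlgebra ℂ 𝔸] [CompleteSpace 𝔸]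

theorem hasDerivAt_exp_ofReal_smul (a : 𝔸) (t : ℝ) :
    HasDerivAt (fun u : ℝ => exp ((u : ℂ) • a)) (exp ((t : ℂ) • a) * a) t := by
  have := (hasDerivAt_exp_smul_const a (t : ℂ)).scomp t Complex.ofRealCLM.hasDerivAt
  rwa [Complex.ofRealCLM_apply, Complex.ofReal_one, one_smul] at this

theorem continuous_exp_ofReal_smul (a : 𝔸) : Continuous fun t : ℝ => exp ((t : ℂ) • a) :=
  continuous_iff_continuousAt.2 fun t => (hasDerivAt_exp_ofReal_smul a t).continuousAt

theorem integral_exp_ofReal_smul_mul (a : 𝔸) (T : ℝ) :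
    ∫ t in (0 : ℝ)..T, exp ((t : ℂ) • a) * a = exp ((T : ℂ) • a) - 1 := by
  rw [intervalIntegral.integral_eq_sub_of_hasDerivAt (fun t _ => hasDerivAt_exp_ofReal_smul a t)
    (((continuous_exp_ofReal_smul a).mul continuous_const).intervalIntegrable _ _)]
  simp

theorem exp_sub_smul_one (a : 𝔸) (c : ℂ) : exp (a - c • 1) = Complex.exp (-c) • exp a := by
  have hc : exp (-c • (1 : 𝔸)) = Complex.exp (-c) • 1 := by
    rw [← Algebra.algebraMap_eq_smul_one, ← algebraMap_exp_comm, Complex.exp_eq_exp_ℂ,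
      Algebra.algebraMap_eq_smul_one]
  have hr := expSeries_radius_eq_top ℂ 𝔸
  rw [sub_eq_add_neg, ← neg_smul, exp_add_of_commute_of_mem_ball (𝕂 := ℂ)
    ((Commute.one_right a).smul_right _) (by simp [hr]) (by simp [hr]), hc, mul_smul_one]

theorem norm_exp_ofReal_smul_I_smul_sub (a : 𝔸) (μ : ℂ) (t : ℝ) :
    ‖exp ((t : ℂ) • Complex.I • (a - μ • 1))‖ =
      Real.exp (t * μ.im) * ‖exp ((t : ℂ) • Complex.I • a)‖ := by
  have : (t : ℂ) • Complex.I • (a - μ • 1) =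
      (t : ℂ) • Complex.I • a - (t * Complex.I * μ) • 1 := by
    simp only [smul_sub, smul_smul]; ring_nf
  rw [this, exp_sub_smul_one, norm_smul, Complex.norm_exp]
  congr 2
  simp

end ExpOfRealSmul

theorem eq_zero_of_forall_one_le_exp_mul_mul {s C : ℝ} (h : ∀ t : ℝ, 1 ≤ Real.exp (t * s) * C) :
    s = 0 := by
  by_contra hs
  have := h (-Real.log (|C| + 1) / s)
  rw [div_mul_cancel₀ _ hs, Real.exp_neg, Real.exp_log (by positivity), inv_mul_eq_div,
    one_le_div (by positivity)] at this
  linarith [le_abs_self C]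

section ExpAverage

variable {E : Type*} [NormedAddCommGroup E] [NormedSpace ℂ E] {B : E →L[ℂ] E} {C : ℝ}

noncomputable def expAverage (B : E →L[ℂ] E) (T : ℝ) : E →L[ℂ] E :=
  T⁻¹ • ∫ t in (0 : ℝ)..T, exp ((t : ℂ) • B)

theorem norm_expAverage_le (hB : ∀ t : ℝ, 0 ≤ t → ‖exp ((t : ℂ) • B)‖ ≤ C) {T : ℝ}
    (hT : 0 < T) : ‖expAverage B T‖ ≤ C := by
  have hint : ‖∫ t in (0 : ℝ)..T, exp ((t : ℂ) • B)‖ ≤ C * |T - 0| :=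
    intervalIntegral.norm_integral_le_of_norm_le_const fun t ht =>
      hB t (Set.uIoc_of_le hT.le ▸ ht).1.le
  rw [expAverage, norm_smul, norm_inv, Real.norm_of_nonneg hT.le, inv_mul_le_iff₀ hT]
  rw [sub_zero, abs_of_pos hT] at hint
  linarith

variable [CompleteSpace E]

theorem expAverage_mul_self (B : E →L[ℂ] E) (T : ℝ) :
    expAverage B T * B = T⁻¹ • (exp ((T : ℂ) • B) - 1) := by
  rw [expAverage, smul_mul_assoc]
  exact congrArg _ ((((ContinuousLinearMap.mul ℂ (E →L[ℂ] E)).flip B).intervalIntegral_comp_comm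
    ((continuous_exp_ofReal_smul B).intervalIntegrable _ _)).symm.trans
      (integral_exp_ofReal_smul_mul B T))

theorem exp_ofReal_smul_apply_of_apply_eq_zero {x : E} (hx : B x = 0) (t : ℝ) :
    exp ((t : ℂ) • B) x = x := by
  have hint : Continuous fun s : ℝ => exp ((s : ℂ) • B) * B :=
    (continuous_exp_ofReal_smul B).mul continuous_const
  have := congrArg (fun L => L x) (integral_exp_ofReal_smul_mul B t)
  simp only [ContinuousLinearMap.intervalIntegral_apply (hint.intervalIntegrable _ _),
    mul_apply_eq_comp, hx, map_zero, intervalIntegral.integral_zero, sub_apply,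
    one_apply_eq_self] at this
  exact sub_eq_zero.1 this.symm

theorem expAverage_apply_of_apply_eq_zero {x : E} (hx : B x = 0) {T : ℝ} (hT : T ≠ 0) :
    expAverage B T x = x := by
  rw [expAverage, smul_apply, ContinuousLinearMap.intervalIntegral_apply
    ((continuous_exp_ofReal_smul B).intervalIntegrable _ _)]
  simp only [exp_ofReal_smul_apply_of_apply_eq_zero hx, intervalIntegral.integral_const, sub_zero,
    smul_smul, inv_mul_cancel₀ hT, one_smul]

theorem tendsto_expAverage_apply_of_apply_eq_zero {x : E} (hx : B x = 0) :
    Tendsto (fun T => expAverage B T x) atTop (𝓝 x) :=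
  tendsto_const_nhds.congr' <| (eventually_ne_atTop 0).mono fun _ hT =>
    (expAverage_apply_of_apply_eq_zero hx hT).symm

theorem tendsto_expAverage_mul_self (hB : ∀ t : ℝ, 0 ≤ t → ‖exp ((t : ℂ) • B)‖ ≤ C) :
    Tendsto (fun T => expAverage B T * B) atTop (𝓝 0) := by
  refine squeeze_zero_norm' ?_ (tendsto_inv_atTop_zero.mul_const (C + 1) |>.trans (by simp))
  filter_upwards [eventually_gt_atTop 0] with T hT
  rw [expAverage_mul_self, norm_smul, norm_inv, Real.norm_of_nonneg hT.le]
  gcongr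
  calc ‖exp ((T : ℂ) • B) - 1‖ ≤ ‖exp ((T : ℂ) • B)‖ + ‖(1 : E →L[ℂ] E)‖ := norm_sub_le _ _
    _ ≤ C + 1 := add_le_add (hB T hT.le) ContinuousLinearMap.norm_id_le

theorem tendsto_expAverage_apply_self (hB : ∀ t : ℝ, 0 ≤ t → ‖exp ((t : ℂ) • B)‖ ≤ C) (z : E) :
    Tendsto (fun T => expAverage B T (B z)) atTop (𝓝 0) := by
  simpa only [Function.comp_def, ContinuousLinearMap.apply_apply, mul_apply_eq_comp, map_zero]
    using ((ContinuousLinearMap.apply ℂ E z).continuous.tendsto 0).comp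
      (tendsto_expAverage_mul_self hB)

theorem ker_inf_range_eq_bot_of_norm_exp_le (hB : ∀ t : ℝ, 0 ≤ t → ‖exp ((t : ℂ) • B)‖ ≤ C) :
    LinearMap.ker (B : E →ₗ[ℂ] E) ⊓ LinearMap.range (B : E →ₗ[ℂ] E) = ⊥ := by
  refine eq_bot_iff.2 fun w ⟨hw, z, hz⟩ => ?_
  have hw : B w = 0 := hw
  have hz : B z = w := hz
  exact tendsto_nhds_unique (tendsto_expAverage_apply_of_apply_eq_zero hw)
    (hz ▸ tendsto_expAverage_apply_self hB z)

theorem norm_projection_le_of_norm_exp_le (hB : ∀ t : ℝ, 0 ≤ t → ‖exp ((t : ℂ) • B)‖ ≤ C)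
    {P : E →L[ℂ] E} (hP : IsIdempotentElem P)
    (hrange : LinearMap.range (P : E →ₗ[ℂ] E) ≤ LinearMap.ker (B : E →ₗ[ℂ] E))
    (hker : LinearMap.ker (P : E →ₗ[ℂ] E) ≤ LinearMap.range (B : E →ₗ[ℂ] E)) :
    ‖P‖ ≤ C := by
  have hC : 0 ≤ C := (norm_nonneg _).trans (hB 0 le_rfl)
  refine P.opNorm_le_bound hC fun x => ?_
  have hPx : B (P x) = 0 := hrange ⟨x, rfl⟩
  obtain ⟨z, hz⟩ : x - P x ∈ LinearMap.range (B : E →ₗ[ℂ] E) := hker <| by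
    change P (x - P x) = 0
    rw [map_sub, ← mul_apply_eq_comp, hP.eq, sub_self]
  have hx : P x + B z = x := by
    change P x + (B : E →ₗ[ℂ] E) z = x
    rw [hz]; abel
  have hlim := (tendsto_expAverage_apply_of_apply_eq_zero hPx).add
    (tendsto_expAverage_apply_self hB z)
  simp only [← map_add, hx, add_zero] at hlim
  refine le_of_tendsto hlim.norm ?_
  filter_upwards [eventually_gt_atTop 0] with T hT
  exact (expAverage B T).le_of_opNorm_le (norm_expAverage_le hB hT) x

end ExpAverage

section BoundedGroup

variable {E : Type*} [NormedAddCommGroup E] [NormedSpace ℂ E] [CompleteSpace E]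
  {A : E →L[ℂ] E} {C : ℝ}

theorem im_eq_zero_of_norm_exp_I_smul_le (h : ∀ t : ℝ, ‖exp ((t : ℂ) • Complex.I • A)‖ ≤ C)
    {μ : ℂ} (hμ : Module.End.HasEigenvalue (A : E →ₗ[ℂ] E) μ) : μ.im = 0 := by
  obtain ⟨v, hv⟩ := hμ.exists_hasEigenvector
  have hAv : A v = μ • v := hv.apply_eq_smul
  have hBv : (Complex.I • (A - μ • 1)) v = 0 := by simp [hAv]
  have hv0 : 0 < ‖v‖ := norm_pos_iff.2 hv.2
  refine eq_zero_of_forall_one_le_exp_mul_mul (C := C) fun t => ?_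
  have hle := (exp ((t : ℂ) • Complex.I • (A - μ • 1))).le_opNorm v
  rw [exp_ofReal_smul_apply_of_apply_eq_zero hBv, norm_exp_ofReal_smul_I_smul_sub] at hle
  have hle' : ‖v‖ ≤ Real.exp (t * μ.im) * C * ‖v‖ := hle.trans (by gcongr; exact h t)
  nlinarith

theorem norm_exp_I_smul_sub_smul_one_le (h : ∀ t : ℝ, ‖exp ((t : ℂ) • Complex.I • A)‖ ≤ C)
    {μ : ℂ} (hμ : μ.im = 0) (t : ℝ) : ‖exp ((t : ℂ) • Complex.I • (A - μ • 1))‖ ≤ C := by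
  rw [norm_exp_ofReal_smul_I_smul_sub, hμ, mul_zero, Real.exp_zero, one_mul]
  exact h t

theorem ker_inf_range_eq_bot_of_norm_exp_I_smul_le
    (h : ∀ t : ℝ, ‖exp ((t : ℂ) • Complex.I • A)‖ ≤ C) {μ : ℂ} (hμ : μ.im = 0) :
    LinearMap.ker ((A - μ • 1 : E →L[ℂ] E) : E →ₗ[ℂ] E) ⊓
      LinearMap.range ((A - μ • 1 : E →L[ℂ] E) : E →ₗ[ℂ] E) = ⊥ := by
  have := ker_inf_range_eq_bot_of_norm_exp_le fun t _ => norm_exp_I_smul_sub_smul_one_le h hμ t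
  rwa [ContinuousLinearMap.toLinearMap_smul, LinearMap.ker_smul _ _ Complex.I_ne_zero,
    LinearMap.range_smul _ _ Complex.I_ne_zero] at this

theorem norm_projection_le_of_norm_exp_I_smul_le
    (h : ∀ t : ℝ, ‖exp ((t : ℂ) • Complex.I • A)‖ ≤ C) {μ : ℂ} (hμ : μ.im = 0)
    {P : E →L[ℂ] E} (hP : IsIdempotentElem P)
    (hrange : LinearMap.range (P : E →ₗ[ℂ] E) ≤
      LinearMap.ker ((A - μ • 1 : E →L[ℂ] E) : E →ₗ[ℂ] E))
    (hker : LinearMap.ker (P : E →ₗ[ℂ] E) ≤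
      LinearMap.range ((A - μ • 1 : E →L[ℂ] E) : E →ₗ[ℂ] E)) :
    ‖P‖ ≤ C := by
  refine norm_projection_le_of_norm_exp_le
    (fun t _ => norm_exp_I_smul_sub_smul_one_le h hμ t) hP ?_ ?_
  · rwa [ContinuousLinearMap.toLinearMap_smul, LinearMap.ker_smul _ _ Complex.I_ne_zero]
  · rwa [ContinuousLinearMap.toLinearMap_smul, LinearMap.range_smul _ _ Complex.I_ne_zero]

end BoundedGroup

/-- If ‖exp(itA)‖ ≤ C for all t ∈ ℝ, then every eigenvalue of A is real and
semi-simple, and every spectral projector (projection onto the eigenspace along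
the range of A - μ) has norm at most C. -/
theorem stmt_4 (N : ℕ) (A : EuclideanSpace ℂ (Fin N) →L[ℂ] EuclideanSpace ℂ (Fin N))
    (C : ℝ)
    (h : ∀ t : ℝ, ‖NormedSpace.exp ((t : ℂ) • Complex.I • A)‖ ≤ C) :
    ∀ μ : ℂ,
      Module.End.HasEigenvalue
        (A : EuclideanSpace ℂ (Fin N) →ₗ[ℂ] EuclideanSpace ℂ (Fin N)) μ →
      μ.im = 0 ∧
      LinearMap.ker ((A - μ • 1 : EuclideanSpace ℂ (Fin N) →L[ℂ] EuclideanSpace ℂ (Fin N)) : EuclideanSpace ℂ (Fin N) →ₗ[ℂ] EuclideanSpace ℂ (Fin N)) ⊓ LinearMap.range ((A - μ • 1 : EuclideanSpace ℂ (Fin N) →L[ℂ] EuclideanSpace ℂ (Fin N)) : EuclideanSpace ℂ (Fin N) →ₗ[ℂ] EuclideanSpace ℂ (Fin N)) = ⊥ ∧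
      ∀ Pr : EuclideanSpace ℂ (Fin N) →L[ℂ] EuclideanSpace ℂ (Fin N),
        Pr * Pr = Pr →
        LinearMap.range (Pr : EuclideanSpace ℂ (Fin N) →ₗ[ℂ] EuclideanSpace ℂ (Fin N)) = LinearMap.ker ((A - μ • 1 : EuclideanSpace ℂ (Fin N) →L[ℂ] EuclideanSpace ℂ (Fin N)) : EuclideanSpace ℂ (Fin N) →ₗ[ℂ] EuclideanSpace ℂ (Fin N)) →
        LinearMap.ker (Pr : EuclideanSpace ℂ (Fin N) →ₗ[ℂ] EuclideanSpace ℂ (Fin N)) = LinearMap.range ((A - μ • 1 : EuclideanSpace ℂ (Fin N) →L[ℂ] EuclideanSpace ℂ (Fin N)) : EuclideanSpace ℂ (Fin N) →ₗ[ℂ] EuclideanSpace ℂ (Fin N)) →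
        ‖Pr‖ ≤ C := by
  intro μ hμ
  have hreal : μ.im = 0 := im_eq_zero_of_norm_exp_I_smul_le h hμ
  exact ⟨hreal, ker_inf_range_eq_bot_of_norm_exp_I_smul_le h hreal, fun Pr hPr hrange hker =>
    norm_projection_le_of_norm_exp_I_smul_le h hreal hPr hrange.le hker.le⟩
end

section
/- If A is a diagonalizable matrix with real eigenvalues λⱼ and spectral projectors Πⱼ bounded by C, then S = Σⱼ Πⱼ* Πⱼ is a Hermitian matrix satisfying S ≥ N⁻¹ Id, ‖S‖ ≤ N C², and S A is Hermitian. -/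
/-!
Write `S = ∑ⱼ Πⱼ* Πⱼ`, so that `re ⟪u, S u⟫ = ∑ⱼ ‖Πⱼ u‖²`. Nonzero orthogonal idempotents have
linearly independent ranges, so there are at most `N` of them. Since `u = ∑ⱼ Πⱼ u`,
Cauchy–Schwarz gives `‖u‖² ≤ N ∑ⱼ ‖Πⱼ u‖²`, and the C*-identity `‖Πⱼ* Πⱼ‖ = ‖Πⱼ‖²` gives
`‖S‖ ≤ N C²`. Finally orthogonality collapses `S A` to `∑ⱼ λⱼ Πⱼ* Πⱼ`, which is self-adjoint
because the `λⱼ` are real.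
-/

open ContinuousLinearMap

theorem OrthogonalIdempotents.card_le_finrank {K V ι : Type*} [DivisionRing K] [AddCommGroup V]
    [Module K V] [Module.Finite K V] [Fintype ι] {e : ι → Module.End K V}
    (he : OrthogonalIdempotents e) (hne : ∀ i, e i ≠ 0) :
    Fintype.card ι ≤ Module.finrank K V := by
  classical
  have hw : ∀ i, ∃ w, e i w ≠ 0 := fun i ↦ by
    by_contra! h
    exact hne i (LinearMap.ext h)
  choose w hw using hw
  have hli : LinearIndependent K fun i ↦ e i (w i) := by
    rw [linearIndependent_iff']
    intro s g hg i hi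
    have hei : ∀ j v, e i (e j v) = if i = j then e i v else 0 := fun j v ↦ by
      rw [← Module.End.mul_apply, he.mul_eq]; split_ifs <;> rfl
    have h : g i • e i (w i) = 0 := by
      simpa only [map_sum, map_smul, hei, map_zero, smul_ite, smul_zero, Finset.sum_ite_eq, hi,
        if_true] using congrArg (e i) hg
    exact (smul_eq_zero.mp h).resolve_right (hw i)
  exact hli.fintype_card_le_finrank

theorem norm_sum_sq_le_card_mul_sum_norm_sq {E ι : Type*} [SeminormedAddCommGroup E] [Fintype ι]
    (v : ι → E) : ‖∑ i, v i‖ ^ 2 ≤ Fintype.card ι * ∑ i, ‖v i‖ ^ 2 := by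
  calc ‖∑ i, v i‖ ^ 2 ≤ (∑ i, ‖v i‖) ^ 2 := by gcongr; exact norm_sum_le _ _
    _ ≤ Fintype.card ι * ∑ i, ‖v i‖ ^ 2 := by
      simpa using sq_sum_le_card_mul_sum_sq (s := Finset.univ) (f := fun i ↦ ‖v i‖)

section Symmetrizer

variable {𝕜 E ι : Type*} [RCLike 𝕜] [NormedAddCommGroup E] [InnerProductSpace 𝕜 E] [CompleteSpace E]
  [Fintype ι]

noncomputable def symmetrizer (P : ι → E →L[𝕜] E) : E →L[𝕜] E :=
  ∑ i, adjoint (P i) * P i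

variable (P : ι → E →L[𝕜] E)

theorem isSelfAdjoint_symmetrizer : IsSelfAdjoint (symmetrizer P) :=
  isSelfAdjoint_sum _ fun i _ ↦ (isPositive_adjoint_comp_self (P i)).isSelfAdjoint

theorem re_inner_symmetrizer_apply (u : E) :
    RCLike.re (inner 𝕜 u (symmetrizer P u)) = ∑ i, ‖P i u‖ ^ 2 := by
  simp only [symmetrizer, sum_apply, inner_sum, map_sum, mul_apply_eq_comp,
    adjoint_inner_right, inner_self_eq_norm_sq]

theorem inv_mul_norm_sq_le_re_inner_symmetrizer {P : ι → E →L[𝕜] E} (hP : ∑ i, P i = 1) {n : ℕ}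
    (hn : Fintype.card ι ≤ n) (u : E) :
    (n : ℝ)⁻¹ * ‖u‖ ^ 2 ≤ RCLike.re (inner 𝕜 u (symmetrizer P u)) := by
  rw [re_inner_symmetrizer_apply]
  have hsum : 0 ≤ ∑ i, ‖P i u‖ ^ 2 := by positivity
  rcases n.eq_zero_or_pos with rfl | hn₀
  · simpa using hsum
  rw [inv_mul_le_iff₀ (by positivity)]
  calc ‖u‖ ^ 2 = ‖∑ i, P i u‖ ^ 2 := by rw [← sum_apply, hP, one_apply_eq_self]
    _ ≤ Fintype.card ι * ∑ i, ‖P i u‖ ^ 2 := norm_sum_sq_le_card_mul_sum_norm_sq _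
    _ ≤ n * ∑ i, ‖P i u‖ ^ 2 := by gcongr

theorem norm_symmetrizer_le {P : ι → E →L[𝕜] E} {C : ℝ} (hP : ∀ i, ‖P i‖ ≤ C) :
    ‖symmetrizer P‖ ≤ Fintype.card ι * C ^ 2 :=
  calc ‖symmetrizer P‖ ≤ ∑ i, ‖adjoint (P i) * P i‖ := norm_sum_le _ _
    _ ≤ ∑ _i : ι, C ^ 2 := Finset.sum_le_sum fun i _ ↦ by
      refine (norm_adjoint_comp_self (P i)).trans_le ?_
      rw [← sq]
      exact pow_le_pow_left₀ (norm_nonneg _) (hP i) 2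
    _ = Fintype.card ι * C ^ 2 := by simp

theorem symmetrizer_mul_sum_smul {P : ι → E →L[𝕜] E} (hP : OrthogonalIdempotents P) (c : ι → 𝕜) :
    symmetrizer P * ∑ i, c i • P i = ∑ i, c i • (adjoint (P i) * P i) := by
  classical
  simp only [symmetrizer, Finset.sum_mul, Finset.mul_sum, mul_smul_comm, mul_assoc, hP.mul_eq,
    mul_ite, mul_zero, Finset.sum_ite_eq', Finset.mem_univ, if_true]

theorem isSelfAdjoint_symmetrizer_mul_sum_smul {P : ι → E →L[𝕜] E} (hP : OrthogonalIdempotents P)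
    (c : ι → ℝ) : IsSelfAdjoint (symmetrizer P * ∑ i, (c i : 𝕜) • P i) := by
  rw [symmetrizer_mul_sum_smul hP]
  exact isSelfAdjoint_sum _ fun i _ ↦ .smul (RCLike.conj_ofReal (c i)) (isPositive_adjoint_comp_self (P i)).isSelfAdjoint

end Symmetrizer

theorem stmt_5_general (N m : ℕ)
    (A : EuclideanSpace ℂ (Fin N) →L[ℂ] EuclideanSpace ℂ (Fin N))
    (lam : Fin m → ℝ)
    (P : Fin m → (EuclideanSpace ℂ (Fin N) →L[ℂ] EuclideanSpace ℂ (Fin N)))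
    (C : ℝ)
    (hsum : ∑ j, P j = 1)
    (hprojmul : ∀ j k, P j * P k = if j = k then P j else 0)
    (hne : ∀ j, P j ≠ 0)
    (hbound : ∀ j, ‖P j‖ ≤ C)
    (hA : A = ∑ j, ((lam j : ℂ)) • P j)
    (S : EuclideanSpace ℂ (Fin N) →L[ℂ] EuclideanSpace ℂ (Fin N))
    (hS : S = ∑ j, ContinuousLinearMap.adjoint (P j) * P j) :
    IsSelfAdjoint S ∧
    (∀ u : EuclideanSpace ℂ (Fin N),
        ((N : ℝ))⁻¹ * ‖u‖ ^ 2 ≤ (inner ℂ u (S u) : ℂ).re) ∧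
    ‖S‖ ≤ (N : ℝ) * C ^ 2 ∧
    IsSelfAdjoint (S * A) := by
  have hP : OrthogonalIdempotents P := OrthogonalIdempotents.iff_mul_eq.mpr hprojmul
  have hmN : m ≤ N := by
    simpa using (hP.map toLinearMapRingHom).card_le_finrank fun j ↦ by
      simpa using coe_injective.ne (hne j)
  change S = symmetrizer P at hS
  subst hS hA
  refine ⟨isSelfAdjoint_symmetrizer P,
    inv_mul_norm_sq_le_re_inner_symmetrizer hsum (by simpa using hmN), ?_,
    isSelfAdjoint_symmetrizer_mul_sum_smul hP lam⟩
  calc ‖symmetrizer P‖ ≤ m * C ^ 2 := by simpa using norm_symmetrizer_le hbound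
    _ ≤ N * C ^ 2 := by gcongr

/-- If A = Σ λⱼ Πⱼ is diagonalizable with (distinct) real eigenvalues and nonzero
spectral projectors bounded by C, then S = Σ Πⱼ* Πⱼ is Hermitian, S ≥ N⁻¹ Id,
‖S‖ ≤ N C², and S A is Hermitian. -/
theorem stmt_5 (N m : ℕ)
    (A : EuclideanSpace ℂ (Fin N) →L[ℂ] EuclideanSpace ℂ (Fin N))
    (lam : Fin m → ℝ)
    (P : Fin m → (EuclideanSpace ℂ (Fin N) →L[ℂ] EuclideanSpace ℂ (Fin N)))
    (C : ℝ) (hC : 0 < C)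
    (hdist : Function.Injective lam)
    (hsum : ∑ j, P j = 1)
    (hprojmul : ∀ j k, P j * P k = if j = k then P j else 0)
    (hne : ∀ j, P j ≠ 0)
    (hbound : ∀ j, ‖P j‖ ≤ C)
    (hA : A = ∑ j, ((lam j : ℂ)) • P j)
    (S : EuclideanSpace ℂ (Fin N) →L[ℂ] EuclideanSpace ℂ (Fin N))
    (hS : S = ∑ j, ContinuousLinearMap.adjoint (P j) * P j) :
    IsSelfAdjoint S ∧
    (∀ u : EuclideanSpace ℂ (Fin N),
        ((N : ℝ))⁻¹ * ‖u‖ ^ 2 ≤ (inner ℂ u (S u) : ℂ).re) ∧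
    ‖S‖ ≤ (N : ℝ) * C ^ 2 ∧
    IsSelfAdjoint (S * A) :=
  stmt_5_general N m A lam P C hsum hprojmul hne hbound hA S hS
end

section
/- Suppose S is a Hermitian positive definite matrix with S ≥ c·Id and ‖S‖ ≤ C, and SA is Hermitian. Then for every complex λ with Im λ ≠ 0, A − λ·Id is invertible and ‖(A − λ·Id)⁻¹‖ ≤ (C/c)|Im λ|⁻¹. -/
/-!
Write `T = A - z • 1`. Since `S` and `S * A` are self-adjoint, `⟪u, S T u⟫` has imaginary part
`-(Im z) ⟪u, S u⟫`, so coercivity of `S` gives `c |Im z| ‖u‖² ≤ |⟪u, S T u⟫| ≤ ‖S‖ ‖u‖ ‖T u‖`.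
Thus `T` is bounded below by `c |Im z| / C`; in finite dimension it is then invertible, and the
lower bound is exactly the bound on the norm of the inverse.
-/

open ContinuousLinearMap

section BoundedBelow

variable {𝕜 E : Type*} [RCLike 𝕜] [NormedAddCommGroup E] [NormedSpace 𝕜 E]
  [FiniteDimensional 𝕜 E] {T : E →L[𝕜] E} {K : ℝ}

theorem ContinuousLinearMap.isUnit_of_norm_le_mul_norm_apply (h : ∀ u, ‖u‖ ≤ K * ‖T u‖) :
    IsUnit T := by
  have := FiniteDimensional.complete 𝕜 E
  refine isUnit_iff_isUnit_toLinearMap.mpr <| (LinearMap.isUnit_iff_ker_eq_bot _).mpr <|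
    LinearMap.ker_eq_bot'.mpr fun u hu => ?_
  simpa [show T u = 0 from hu] using h u

theorem ContinuousLinearMap.norm_ring_inverse_le_of_norm_le_mul_norm_apply (hK : 0 ≤ K)
    (h : ∀ u, ‖u‖ ≤ K * ‖T u‖) : ‖Ring.inverse T‖ ≤ K := by
  obtain ⟨U, rfl⟩ := isUnit_of_norm_le_mul_norm_apply h
  rw [Ring.inverse_unit]
  refine opNorm_le_bound _ hK fun v => ?_
  simpa [← mul_apply_eq_comp, U.mul_inv, one_apply_eq_self] using h ((↑U⁻¹ : E →L[𝕜] E) v)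

end BoundedBelow

section Resolvent

variable {E : Type*} [NormedAddCommGroup E] [InnerProductSpace ℂ E] [CompleteSpace E]
  {A S : E →L[ℂ] E}

theorem im_inner_apply_sub_smul_apply (hS : IsSelfAdjoint S) (hSA : IsSelfAdjoint (S * A))
    (z : ℂ) (u : E) :
    (inner ℂ u (S ((A - z • 1) u))).im = -(z.im * (inner ℂ u (S u)).re) := by
  have hSu := hS.isSymmetric.im_inner_self_apply u
  have hSAu := hSA.isSymmetric.im_inner_self_apply u
  simp only [coe_coe, mul_apply_eq_comp, RCLike.im_to_complex] at hSu hSAu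
  simp [Complex.mul_im, hSu, hSAu]

theorem mul_abs_im_mul_norm_le_norm_mul_norm_sub_smul_apply (hS : IsSelfAdjoint S)
    (hSA : IsSelfAdjoint (S * A)) {c : ℝ} (hpos : ∀ u : E, c * ‖u‖ ^ 2 ≤ (inner ℂ u (S u)).re)
    (z : ℂ) (u : E) : c * |z.im| * ‖u‖ ≤ ‖S‖ * ‖(A - z • 1) u‖ := by
  set T := A - z • 1
  have hsq : c * |z.im| * ‖u‖ ^ 2 ≤ ‖u‖ * (‖S‖ * ‖T u‖) :=
    calc c * |z.im| * ‖u‖ ^ 2 = |z.im| * (c * ‖u‖ ^ 2) := by ring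
      _ ≤ |z.im| * |(inner ℂ u (S u)).re| := by gcongr; exact (hpos u).trans (le_abs_self _)
      _ = |(inner ℂ u (S (T u))).im| := by
          rw [im_inner_apply_sub_smul_apply hS hSA, abs_neg, abs_mul]
      _ ≤ ‖inner ℂ u (S (T u))‖ := Complex.abs_im_le_norm _
      _ ≤ ‖u‖ * ‖S (T u)‖ := norm_inner_le_norm _ _
      _ ≤ ‖u‖ * (‖S‖ * ‖T u‖) := by gcongr; exact S.le_opNorm _
  rcases (norm_nonneg u).eq_or_lt with hu | hu
  · rw [← hu, mul_zero]; positivity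
  · exact le_of_mul_le_mul_right (by nlinarith) hu

end Resolvent

theorem stmt_6_general (N : ℕ)
    (A S : EuclideanSpace ℂ (Fin N) →L[ℂ] EuclideanSpace ℂ (Fin N))
    (c C : ℝ) (hc : 0 < c)
    (hSsa : IsSelfAdjoint S)
    (hSpos : ∀ u : EuclideanSpace ℂ (Fin N), c * ‖u‖ ^ 2 ≤ (inner ℂ u (S u) : ℂ).re)
    (hSnorm : ‖S‖ ≤ C)
    (hSA : IsSelfAdjoint (S * A)) :
    ∀ z : ℂ, z.im ≠ 0 →
      IsUnit (A - z • 1) ∧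
      ‖Ring.inverse (A - z • 1)‖ ≤ (C / c) * |z.im|⁻¹ := by
  intro z hz
  have hcz : 0 < c * |z.im| := by positivity
  have hC : 0 ≤ C := (norm_nonneg S).trans hSnorm
  have hbound : ∀ u, ‖u‖ ≤ C / c * |z.im|⁻¹ * ‖(A - z • 1) u‖ := fun u =>
    calc ‖u‖ = (c * |z.im|)⁻¹ * (c * |z.im| * ‖u‖) := by field_simp
      _ ≤ (c * |z.im|)⁻¹ * (C * ‖(A - z • 1) u‖) := by
          grw [mul_abs_im_mul_norm_le_norm_mul_norm_sub_smul_apply hSsa hSA hSpos z u, hSnorm]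
      _ = C / c * |z.im|⁻¹ * ‖(A - z • 1) u‖ := by field_simp
  exact ⟨isUnit_of_norm_le_mul_norm_apply hbound,
    norm_ring_inverse_le_of_norm_le_mul_norm_apply (by positivity) hbound⟩

/-- If S is Hermitian with c·Id ≤ S, ‖S‖ ≤ C, and SA is Hermitian, then for
Im λ ≠ 0, A - λ·Id is invertible with ‖(A - λ·Id)⁻¹‖ ≤ (C/c)|Im λ|⁻¹. -/
theorem stmt_6 (N : ℕ)
    (A S : EuclideanSpace ℂ (Fin N) →L[ℂ] EuclideanSpace ℂ (Fin N))
    (c C : ℝ) (hc : 0 < c) (hcC : c ≤ C)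
    (hSsa : IsSelfAdjoint S)
    (hSpos : ∀ u : EuclideanSpace ℂ (Fin N), c * ‖u‖ ^ 2 ≤ (inner ℂ u (S u) : ℂ).re)
    (hSnorm : ‖S‖ ≤ C)
    (hSA : IsSelfAdjoint (S * A)) :
    ∀ z : ℂ, z.im ≠ 0 →
      IsUnit (A - z • 1) ∧
      ‖Ring.inverse (A - z • 1)‖ ≤ (C / c) * |z.im|⁻¹ :=
  stmt_6_general N A S c C hc hSsa hSpos hSnorm hSA
end

section
/- If for every λ with Im λ ≠ 0 the resolvent bound ‖(A − λ Id)⁻¹‖ ≤ C |Im λ|⁻¹ holds, then every eigenvalue of A is real and semi-simple, and each spectral projector Π of A satisfies ‖Π‖ ≤ C. -/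
/-! For real `μ` and `ε > 0` put `P ε = -iε (A - (μ + iε))⁻¹`. The resolvent bound gives
`‖P ε‖ ≤ C`; moreover `P ε` fixes `ker (A - μ)` and sends `(A - μ) w` to `iε (P ε w - w) = O(ε)`.
So as `ε → 0⁺`, `P ε` converges pointwise to the projection onto `ker (A - μ)` along
`range (A - μ)`: a vector in both is fixed by `P ε` yet tends to `0`, and the limit projection
inherits the bound `C`. A non-real eigenvalue is impossible since `A - μ` is then invertible. -/

open Filter Topology Complex

section Approximation

variable {𝕜 E ι : Type*} [NontriviallyNormedField 𝕜] [NormedAddCommGroup E] [NormedSpace 𝕜 E]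
  {l : Filter ι} {P : ι → E →L[𝕜] E} {K R : Submodule 𝕜 E}

theorem inf_eq_bot_of_eventually_fixed_of_tendsto_zero [l.NeBot]
    (hK : ∀ v ∈ K, ∀ᶠ i in l, P i v = v) (hR : ∀ v ∈ R, Tendsto (fun i ↦ P i v) l (𝓝 0)) :
    K ⊓ R = ⊥ := by
  refine (Submodule.eq_bot_iff _).2 fun v ⟨hvK, hvR⟩ ↦ ?_
  have hv : Tendsto (fun i ↦ P i v) l (𝓝 v) :=
    tendsto_const_nhds.congr' ((hK v hvK).mono fun _ hi ↦ hi.symm)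
  exact tendsto_nhds_unique hv (hR v hvR)

theorem norm_le_of_eventually_fixed_of_tendsto_zero [l.NeBot] {C : ℝ}
    (hC : ∀ᶠ i in l, ‖P i‖ ≤ C) (hK : ∀ v ∈ K, ∀ᶠ i in l, P i v = v)
    (hR : ∀ v ∈ R, Tendsto (fun i ↦ P i v) l (𝓝 0)) {Pr : E →L[𝕜] E} (hPr : Pr * Pr = Pr)
    (hrange : LinearMap.range (Pr : E →ₗ[𝕜] E) = K) (hker : LinearMap.ker (Pr : E →ₗ[𝕜] E) = R) :
    ‖Pr‖ ≤ C := by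
  obtain ⟨i, hi⟩ := hC.exists
  refine Pr.opNorm_le_bound ((norm_nonneg _).trans hi) fun x ↦ ?_
  have hPrx : Pr x ∈ K := hrange ▸ LinearMap.mem_range_self _ x
  have hsub : x - Pr x ∈ R := by
    rw [← hker, LinearMap.mem_ker, ContinuousLinearMap.coe_coe, map_sub,
      ← mul_apply_eq_comp, hPr, sub_self]
  have hlim : Tendsto (fun i ↦ P i x) l (𝓝 (Pr x)) := by
    have hsplit : Tendsto (fun i ↦ P i (Pr x) + P i (x - Pr x)) l (𝓝 (Pr x + 0)) :=
      (tendsto_const_nhds.congr' ((hK _ hPrx).mono fun _ hi ↦ hi.symm)).add (hR _ hsub)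
    simpa only [← map_add, add_sub_cancel, add_zero] using hsplit
  exact le_of_tendsto hlim.norm (hC.mono fun i hi ↦ (P i).le_of_opNorm_le hi x)

end Approximation

theorem ContinuousLinearMap.ringInverse_apply_apply {R M : Type*} [Semiring R]
    [TopologicalSpace M] [AddCommMonoid M] [Module R M] {T : M →L[R] M} (hT : IsUnit T) (x : M) :
    Ring.inverse T (T x) = x := by
  rw [← mul_apply_eq_comp, Ring.inverse_mul_cancel T hT, one_apply_eq_self]

section Resolvent

variable {E : Type*} [NormedAddCommGroup E] [NormedSpace ℂ E] {A : E →L[ℂ] E} {C : ℝ}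

def HasResolventBound (A : E →L[ℂ] E) (C : ℝ) : Prop :=
  ∀ z : ℂ, z.im ≠ 0 → IsUnit (A - z • 1) ∧ ‖Ring.inverse (A - z • 1)‖ ≤ C * |z.im|⁻¹

noncomputable def approxSpectralProj (A : E →L[ℂ] E) (μ : ℂ) (ε : ℝ) : E →L[ℂ] E :=
  -((ε : ℂ) * I) • Ring.inverse (A - (μ + ε * I) • 1)

theorem approxSpectralProj_apply_of_mem_ker {μ : ℂ} {ε : ℝ}
    (hu : IsUnit (A - (μ + ε * I) • 1)) {v : E} (hv : (A - μ • 1) v = 0) :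
    approxSpectralProj A μ ε v = v := by
  have hshift : (A - (μ + ε * I) • 1) v = -((ε : ℂ) * I) • v := by
    rw [add_smul, ← sub_sub, sub_apply, hv]; simp
  have hinv := ContinuousLinearMap.ringInverse_apply_apply hu v
  rw [hshift, map_smul] at hinv
  exact hinv

theorem approxSpectralProj_apply_sub_smul {μ : ℂ} {ε : ℝ}
    (hu : IsUnit (A - (μ + ε * I) • 1)) (w : E) :
    approxSpectralProj A μ ε ((A - μ • 1) w) =
      ((ε : ℂ) * I) • (approxSpectralProj A μ ε w - w) := by
  have hshift : (A - μ • 1) w = (A - (μ + ε * I) • 1) w + ((ε : ℂ) * I) • w := by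
    simp [add_smul, sub_add_eq_sub_sub]
  simp only [approxSpectralProj, hshift, smul_apply, map_add, map_smul,
    ContinuousLinearMap.ringInverse_apply_apply hu]
  module

namespace HasResolventBound

theorem im_eq_zero_of_hasEigenvalue (h : HasResolventBound A C) {μ : ℂ}
    (hμ : Module.End.HasEigenvalue (A : E →ₗ[ℂ] E) μ) : μ.im = 0 := by
  obtain ⟨v, hv⟩ := hμ.exists_hasEigenvector
  by_contra him
  have hAv : (A - μ • 1) v = 0 := by simpa [sub_eq_zero] using hv.apply_eq_smul
  have hv0 := ContinuousLinearMap.ringInverse_apply_apply (h μ him).1 v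
  exact hv.2 (by simpa [hAv] using hv0.symm)

theorem isUnit_shift (h : HasResolventBound A C) {μ : ℂ} (hμ : μ.im = 0) {ε : ℝ} (hε : 0 < ε) :
    IsUnit (A - (μ + ε * I) • 1) :=
  (h _ (by simp [hμ, hε.ne'])).1

theorem norm_approxSpectralProj_le (h : HasResolventBound A C) {μ : ℂ} (hμ : μ.im = 0) {ε : ℝ}
    (hε : 0 < ε) : ‖approxSpectralProj A μ ε‖ ≤ C := by
  have hbound := (h _ (by simp [hμ, hε.ne'] : (μ + ε * I).im ≠ 0)).2
  simp only [add_im, hμ, mul_im, ofReal_re, I_im, ofReal_im, I_re, zero_add, mul_one, mul_zero,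
    add_zero, abs_of_pos hε] at hbound
  rw [approxSpectralProj, norm_smul, norm_neg, norm_mul, norm_I, mul_one, norm_real,
    Real.norm_of_nonneg hε.le]
  calc ε * ‖Ring.inverse (A - (μ + ε * I) • 1)‖ ≤ ε * (C * ε⁻¹) := by gcongr
    _ = C := by field_simp

theorem eventually_approxSpectralProj_apply_of_mem_ker (h : HasResolventBound A C) {μ : ℂ}
    (hμ : μ.im = 0) {v : E}
    (hv : v ∈ LinearMap.ker ((A - μ • 1 : E →L[ℂ] E) : E →ₗ[ℂ] E)) :
    ∀ᶠ ε in 𝓝[>] (0 : ℝ), approxSpectralProj A μ ε v = v :=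
  eventually_nhdsWithin_of_forall fun _ hε ↦
    approxSpectralProj_apply_of_mem_ker (h.isUnit_shift hμ hε) hv

theorem tendsto_approxSpectralProj_apply_of_mem_range (h : HasResolventBound A C) {μ : ℂ}
    (hμ : μ.im = 0) {v : E}
    (hv : v ∈ LinearMap.range ((A - μ • 1 : E →L[ℂ] E) : E →ₗ[ℂ] E)) :
    Tendsto (fun ε : ℝ ↦ approxSpectralProj A μ ε v) (𝓝[>] 0) (𝓝 0) := by
  obtain ⟨w, rfl⟩ := hv
  have hlin : Tendsto (fun ε : ℝ ↦ ε * ((1 + C) * ‖w‖)) (𝓝[>] 0) (𝓝 0) := by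
    simpa using ((tendsto_id (x := 𝓝 (0 : ℝ))).mul_const ((1 + C) * ‖w‖)).mono_left
      nhdsWithin_le_nhds
  refine squeeze_zero_norm' (eventually_nhdsWithin_of_forall fun ε (hε : 0 < ε) ↦ ?_) hlin
  rw [ContinuousLinearMap.coe_coe, approxSpectralProj_apply_sub_smul (h.isUnit_shift hμ hε),
    norm_smul, norm_mul, norm_I, mul_one, norm_real, Real.norm_of_nonneg hε.le]
  have hPw := (approxSpectralProj A μ ε).le_of_opNorm_le (h.norm_approxSpectralProj_le hμ hε) w
  gcongr
  calc ‖approxSpectralProj A μ ε w - w‖ ≤ ‖approxSpectralProj A μ ε w‖ + ‖w‖ := norm_sub_le _ _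
    _ ≤ (1 + C) * ‖w‖ := by linarith

end HasResolventBound

end Resolvent

/-- If the resolvent bound ‖(A - λ)⁻¹‖ ≤ C|Im λ|⁻¹ holds off the real axis, then
all eigenvalues of A are real and semi-simple, with spectral projectors of norm ≤ C. -/
theorem stmt_7 (N : ℕ) (A : EuclideanSpace ℂ (Fin N) →L[ℂ] EuclideanSpace ℂ (Fin N))
    (C : ℝ)
    (h : ∀ z : ℂ, z.im ≠ 0 →
      IsUnit (A - z • 1) ∧ ‖Ring.inverse (A - z • 1)‖ ≤ C * |z.im|⁻¹) :
    ∀ μ : ℂ,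
      Module.End.HasEigenvalue
        (A : EuclideanSpace ℂ (Fin N) →ₗ[ℂ] EuclideanSpace ℂ (Fin N)) μ →
      μ.im = 0 ∧
      LinearMap.ker ((A - μ • 1 : EuclideanSpace ℂ (Fin N) →L[ℂ] EuclideanSpace ℂ (Fin N)) : EuclideanSpace ℂ (Fin N) →ₗ[ℂ] EuclideanSpace ℂ (Fin N)) ⊓ LinearMap.range ((A - μ • 1 : EuclideanSpace ℂ (Fin N) →L[ℂ] EuclideanSpace ℂ (Fin N)) : EuclideanSpace ℂ (Fin N) →ₗ[ℂ] EuclideanSpace ℂ (Fin N)) = ⊥ ∧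
      ∀ Pr : EuclideanSpace ℂ (Fin N) →L[ℂ] EuclideanSpace ℂ (Fin N),
        Pr * Pr = Pr →
        LinearMap.range (Pr : EuclideanSpace ℂ (Fin N) →ₗ[ℂ] EuclideanSpace ℂ (Fin N)) = LinearMap.ker ((A - μ • 1 : EuclideanSpace ℂ (Fin N) →L[ℂ] EuclideanSpace ℂ (Fin N)) : EuclideanSpace ℂ (Fin N) →ₗ[ℂ] EuclideanSpace ℂ (Fin N)) →
        LinearMap.ker (Pr : EuclideanSpace ℂ (Fin N) →ₗ[ℂ] EuclideanSpace ℂ (Fin N)) = LinearMap.range ((A - μ • 1 : EuclideanSpace ℂ (Fin N) →L[ℂ] EuclideanSpace ℂ (Fin N)) : EuclideanSpace ℂ (Fin N) →ₗ[ℂ] EuclideanSpace ℂ (Fin N)) →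
        ‖Pr‖ ≤ C := by
  intro μ hμ
  have hbound : HasResolventBound A C := h
  have hreal := hbound.im_eq_zero_of_hasEigenvalue hμ
  have hker := fun v ↦ hbound.eventually_approxSpectralProj_apply_of_mem_ker hreal (v := v)
  have hrange := fun v ↦ hbound.tendsto_approxSpectralProj_apply_of_mem_range hreal (v := v)
  have hnorm : ∀ᶠ ε in 𝓝[>] (0 : ℝ), ‖approxSpectralProj A μ ε‖ ≤ C :=
    eventually_nhdsWithin_of_forall fun _ hε ↦ hbound.norm_approxSpectralProj_le hreal hε
  exact ⟨hreal, inf_eq_bot_of_eventually_fixed_of_tendsto_zero hker hrange,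
    fun _ hPr hPrange hPker ↦
      norm_le_of_eventually_fixed_of_tendsto_zero hnorm hker hrange hPr hPrange hPker⟩
end

section
/- Let L and S be matrices with SL Hermitian, and J invertible with Re(SJu, u) ≥ c|u|² for all u ∈ ker L, where c > 0. Then 0 is a semi-simple eigenvalue of J⁻¹L, i.e., ker(L) ∩ J⁻¹(range L) = {0}. -/
open scoped InnerProductSpace

/-! If `J u = L v` with `L u = 0`, self-adjointness of `S L` gives
`⟪S J u, u⟫ = ⟪S L v, u⟫ = ⟪v, S L u⟫ = 0`, which the coercivity bound `c ‖u‖² ≤ Re ⟪S J u, u⟫`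
on `ker L` only allows for `u = 0`. -/

section

variable {𝕜 E : Type*} [RCLike 𝕜] [NormedAddCommGroup E] [InnerProductSpace 𝕜 E] [CompleteSpace E]

theorem inner_apply_apply_eq_zero_of_isSelfAdjoint_mul {S L : E →L[𝕜] E}
    (hSL : IsSelfAdjoint (S * L)) (v : E) {u : E} (hu : L u = 0) : ⟪S (L v), u⟫_𝕜 = 0 :=
  calc ⟪S (L v), u⟫_𝕜 = ⟪v, (S * L) u⟫_𝕜 := hSL.isSymmetric v u
    _ = 0 := by simp [hu]

theorem ker_inf_comap_range_eq_bot_of_isSelfAdjoint_mul {S L J : E →L[𝕜] E} {c : ℝ} (hc : 0 < c)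
    (hSL : IsSelfAdjoint (S * L))
    (hpos : ∀ u ∈ LinearMap.ker (L : E →ₗ[𝕜] E), c * ‖u‖ ^ 2 ≤ RCLike.re ⟪S (J u), u⟫_𝕜) :
    LinearMap.ker (L : E →ₗ[𝕜] E) ⊓ (LinearMap.range (L : E →ₗ[𝕜] E)).comap (J : E →ₗ[𝕜] E) = ⊥ := by
  rw [eq_bot_iff]
  rintro u ⟨huL, v, hv⟩
  have hinner : ⟪S (J u), u⟫_𝕜 = 0 := by
    rw [← ContinuousLinearMap.coe_coe J, ← hv]
    exact inner_apply_apply_eq_zero_of_isSelfAdjoint_mul hSL v huL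
  have hnorm : c * ‖u‖ ^ 2 ≤ 0 := by simpa [hinner] using hpos u huL
  have : ‖u‖ ^ 2 = 0 := le_antisymm (nonpos_of_mul_nonpos_right hnorm hc) (sq_nonneg _)
  simpa using this

end

theorem stmt_9_general (N : ℕ)
    (L S J : EuclideanSpace ℂ (Fin N) →L[ℂ] EuclideanSpace ℂ (Fin N))
    (c : ℝ) (hc : 0 < c)
    (hSL : IsSelfAdjoint (S * L))
    (hpos : ∀ u ∈ LinearMap.ker (L : EuclideanSpace ℂ (Fin N) →ₗ[ℂ] EuclideanSpace ℂ (Fin N)), c * ‖u‖ ^ 2 ≤ (inner ℂ (S (J u)) u : ℂ).re) :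
    LinearMap.ker (L : EuclideanSpace ℂ (Fin N) →ₗ[ℂ] EuclideanSpace ℂ (Fin N)) ⊓
      (LinearMap.range (L : EuclideanSpace ℂ (Fin N) →ₗ[ℂ] EuclideanSpace ℂ (Fin N))).comap
        (J : EuclideanSpace ℂ (Fin N) →ₗ[ℂ] EuclideanSpace ℂ (Fin N)) = ⊥ :=
  ker_inf_comap_range_eq_bot_of_isSelfAdjoint_mul hc hSL hpos

/-- If SL is Hermitian, J invertible and Re(SJu,u) ≥ c|u|² on ker L, then 0 is a
semi-simple eigenvalue of J⁻¹L: ker L ∩ J⁻¹(range L) = {0}. -/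
theorem stmt_9 (N : ℕ)
    (L S J : EuclideanSpace ℂ (Fin N) →L[ℂ] EuclideanSpace ℂ (Fin N))
    (c : ℝ) (hc : 0 < c) (hJ : IsUnit J)
    (hSL : IsSelfAdjoint (S * L))
    (hpos : ∀ u ∈ LinearMap.ker (L : EuclideanSpace ℂ (Fin N) →ₗ[ℂ] EuclideanSpace ℂ (Fin N)), c * ‖u‖ ^ 2 ≤ (inner ℂ (S (J u)) u : ℂ).re) :
    LinearMap.ker (L : EuclideanSpace ℂ (Fin N) →ₗ[ℂ] EuclideanSpace ℂ (Fin N)) ⊓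
      (LinearMap.range (L : EuclideanSpace ℂ (Fin N) →ₗ[ℂ] EuclideanSpace ℂ (Fin N))).comap
        (J : EuclideanSpace ℂ (Fin N) →ₗ[ℂ] EuclideanSpace ℂ (Fin N)) = ⊥ :=
  stmt_9_general N L S J c hc hSL hpos
end

section
/- Let L, S, J be matrices with SL Hermitian, J invertible, and Re(SJu, u) ≥ c|u|² for all u ∈ ker L. Then the spectral projector Π onto ker L along J⁻¹(range L) satisfies Π* S J Π = Π* S J and ‖Π‖ ≤ ‖SJ‖/c. -/
/-!
Since `S L` is self-adjoint, `⟪S (L v), u⟫ = ⟪v, S (L u)⟫ = 0` whenever `L u = 0`: the form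
`⟪S ·, ·⟫` pairs `range L` trivially with `ker L`. As `J (x - Π x) ∈ range L` and `Π y ∈ ker L`,
this gives `⟪S J x, Π y⟫ = ⟪S J Π x, Π y⟫`, i.e. `Π* S J Π = Π* S J`. Then for `u = Π x ∈ ker L`,
`c ‖Π x‖² ≤ Re ⟪S J Π x, Π x⟫ = Re ⟪S J x, Π x⟫ ≤ ‖S J‖ ‖x‖ ‖Π x‖`.
-/

open ContinuousLinearMap RCLike
open scoped InnerProduct InnerProductSpace

namespace ContinuousLinearMap

variable {𝕜 E : Type*} [RCLike 𝕜] [NormedAddCommGroup E] [InnerProductSpace 𝕜 E] [CompleteSpace E]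

theorem inner_apply_range_eq_zero_of_isSelfAdjoint_mul {S L : E →L[𝕜] E}
    (hSL : IsSelfAdjoint (S * L)) {w u : E} (hw : w ∈ LinearMap.range (L : E →ₗ[𝕜] E))
    (hu : L u = 0) :
    ⟪S w, u⟫_𝕜 = 0 := by
  obtain ⟨v, rfl⟩ := hw
  change ⟪(S * L) v, u⟫_𝕜 = 0
  rw [← adjoint_inner_right, hSL.adjoint_eq, mul_apply_eq_comp, hu, map_zero, inner_zero_right]

theorem adjoint_mul_mul_eq_of_isSelfAdjoint_mul {S L J P : E →L[𝕜] E}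
    (hSL : IsSelfAdjoint (S * L)) (hP : IsIdempotentElem P) (hPL : ∀ x, L (P x) = 0)
    (hJ : ∀ x, P x = 0 → J x ∈ LinearMap.range (L : E →ₗ[𝕜] E)) :
    P† * (S * J * P) = P† * (S * J) := by
  refine ext fun x => ext_inner_right 𝕜 fun y => ?_
  have hx : P (x - P x) = 0 := by
    rw [map_sub, ← mul_apply_eq_comp, hP.eq, sub_self]
  have h := inner_apply_range_eq_zero_of_isSelfAdjoint_mul hSL (hJ _ hx) (hPL y)
  rw [map_sub, map_sub, inner_sub_left, sub_eq_zero] at h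
  simp only [mul_apply_eq_comp, adjoint_inner_left, h]

theorem norm_le_div_of_adjoint_mul_mul_eq {A P : E →L[𝕜] E} {c : ℝ} (hc : 0 < c)
    (hAP : P† * (A * P) = P† * A) (hcoer : ∀ x, c * ‖P x‖ ^ 2 ≤ re ⟪A (P x), P x⟫_𝕜) :
    ‖P‖ ≤ ‖A‖ / c := by
  refine opNorm_le_bound P (by positivity) fun x => ?_
  have hsymm : ⟪A (P x), P x⟫_𝕜 = ⟪A x, P x⟫_𝕜 :=
    calc ⟪A (P x), P x⟫_𝕜 = ⟪(P†) (A (P x)), x⟫_𝕜 := (adjoint_inner_left P x _).symm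
      _ = ⟪(P†) (A x), x⟫_𝕜 := congrArg (fun y => ⟪y, x⟫_𝕜) (DFunLike.congr_fun hAP x)
      _ = ⟪A x, P x⟫_𝕜 := adjoint_inner_left P x _
  have hbound : c * ‖P x‖ ^ 2 ≤ ‖A‖ * ‖x‖ * ‖P x‖ :=
    calc c * ‖P x‖ ^ 2 ≤ re ⟪A x, P x⟫_𝕜 := hsymm ▸ hcoer x
      _ ≤ ‖⟪A x, P x⟫_𝕜‖ := re_le_norm _
      _ ≤ ‖A x‖ * ‖P x‖ := norm_inner_le_norm _ _
      _ ≤ ‖A‖ * ‖x‖ * ‖P x‖ := by gcongr; exact le_opNorm A x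
  rcases (norm_nonneg (P x)).eq_or_lt with hPx | hPx
  · rw [← hPx]; positivity
  rw [div_mul_eq_mul_div, le_div_iff₀ hc]
  nlinarith

end ContinuousLinearMap

theorem stmt_10_general (N : ℕ)
    (L S J : EuclideanSpace ℂ (Fin N) →L[ℂ] EuclideanSpace ℂ (Fin N))
    (c : ℝ) (hc : 0 < c)
    (hSL : IsSelfAdjoint (S * L))
    (hpos : ∀ u ∈ LinearMap.ker (L : EuclideanSpace ℂ (Fin N) →ₗ[ℂ] EuclideanSpace ℂ (Fin N)), c * ‖u‖ ^ 2 ≤ (inner ℂ (S (J u)) u : ℂ).re)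
    (Pr : EuclideanSpace ℂ (Fin N) →L[ℂ] EuclideanSpace ℂ (Fin N))
    (hPr : Pr * Pr = Pr)
    (hPrange : LinearMap.range (Pr : EuclideanSpace ℂ (Fin N) →ₗ[ℂ] EuclideanSpace ℂ (Fin N)) = LinearMap.ker (L : EuclideanSpace ℂ (Fin N) →ₗ[ℂ] EuclideanSpace ℂ (Fin N)))
    (hPker : LinearMap.ker (Pr : EuclideanSpace ℂ (Fin N) →ₗ[ℂ] EuclideanSpace ℂ (Fin N)) =
      (LinearMap.range (L : EuclideanSpace ℂ (Fin N) →ₗ[ℂ] EuclideanSpace ℂ (Fin N))).comap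
        (J : EuclideanSpace ℂ (Fin N) →ₗ[ℂ] EuclideanSpace ℂ (Fin N))) :
    ContinuousLinearMap.adjoint Pr * (S * J * Pr) =
        ContinuousLinearMap.adjoint Pr * (S * J) ∧
      ‖Pr‖ ≤ ‖S * J‖ / c := by
  have hPL : ∀ x, L (Pr x) = 0 := fun x => hPrange.le (LinearMap.mem_range_self _ x)
  have hSJ := adjoint_mul_mul_eq_of_isSelfAdjoint_mul hSL hPr hPL fun x hx => hPker.le hx
  exact ⟨hSJ, norm_le_div_of_adjoint_mul_mul_eq hc hSJ fun x => hpos _ (hPL x)⟩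

/-- If SL is Hermitian, J invertible and Re(SJu,u) ≥ c|u|² on ker L, then the
projector Pr onto ker L along J⁻¹(range L) satisfies Pr* S J Pr = Pr* S J and
‖Pr‖ ≤ ‖SJ‖/c. -/
theorem stmt_10 (N : ℕ)
    (L S J : EuclideanSpace ℂ (Fin N) →L[ℂ] EuclideanSpace ℂ (Fin N))
    (c : ℝ) (hc : 0 < c) (hJ : IsUnit J)
    (hSL : IsSelfAdjoint (S * L))
    (hpos : ∀ u ∈ LinearMap.ker (L : EuclideanSpace ℂ (Fin N) →ₗ[ℂ] EuclideanSpace ℂ (Fin N)), c * ‖u‖ ^ 2 ≤ (inner ℂ (S (J u)) u : ℂ).re)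
    (Pr : EuclideanSpace ℂ (Fin N) →L[ℂ] EuclideanSpace ℂ (Fin N))
    (hPr : Pr * Pr = Pr)
    (hPrange : LinearMap.range (Pr : EuclideanSpace ℂ (Fin N) →ₗ[ℂ] EuclideanSpace ℂ (Fin N)) = LinearMap.ker (L : EuclideanSpace ℂ (Fin N) →ₗ[ℂ] EuclideanSpace ℂ (Fin N)))
    (hPker : LinearMap.ker (Pr : EuclideanSpace ℂ (Fin N) →ₗ[ℂ] EuclideanSpace ℂ (Fin N)) =
      (LinearMap.range (L : EuclideanSpace ℂ (Fin N) →ₗ[ℂ] EuclideanSpace ℂ (Fin N))).comap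
        (J : EuclideanSpace ℂ (Fin N) →ₗ[ℂ] EuclideanSpace ℂ (Fin N))) :
    ContinuousLinearMap.adjoint Pr * (S * J * Pr) =
        ContinuousLinearMap.adjoint Pr * (S * J) ∧
      ‖Pr‖ ≤ ‖S * J‖ / c :=
  stmt_10_general N L S J c hc hSL hpos Pr hPr hPrange hPker
end

section
/- Let L, S, J be matrices with SL Hermitian, J invertible, and Re(SJu, u) ≥ c|u|² for all u ∈ ker L with c > 0. Then for a vector f: Sf is orthogonal to ker L if and only if f lies in the range of L. -/
/-!
Symmetry of `S ∘ L` gives `S (range L) ⊥ ker L`, so `range L` lies in `M := {f | S f ⊥ ker L}`.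
Conversely `M` meets `J (ker L)` trivially: if `J w ∈ M` with `w ∈ ker L` then `⟪S J w, w⟫ = 0`,
forcing `w = 0` by coercivity. Since `dim range L + dim J (ker L) = dim E` by rank–nullity and
injectivity of `J`, the inclusion `range L ≤ M` is an equality.
-/

open Module Submodule LinearMap

theorem eq_of_le_of_disjoint_of_finrank_add_eq {K V : Type*} [DivisionRing K] [AddCommGroup V]
    [Module K V] [FiniteDimensional K V] {p M q : Submodule K V}
    (hpM : p ≤ M) (hMq : Disjoint M q) (hdim : finrank K p + finrank K q = finrank K V) :
    p = M :=
  eq_of_le_of_finrank_le hpM (by linarith [finrank_add_finrank_le_of_disjoint hMq])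

section

variable {𝕜 E : Type*} [RCLike 𝕜] [NormedAddCommGroup E] [InnerProductSpace 𝕜 E]

local notation "⟪" x ", " y "⟫" => inner 𝕜 x y

theorem LinearMap.IsSymmetric.range_le_comap_orthogonal_ker {S L : E →ₗ[𝕜] E}
    (hSL : (S ∘ₗ L).IsSymmetric) : range L ≤ (ker L)ᗮ.comap S := by
  rintro _ ⟨g, rfl⟩
  refine (mem_orthogonal' _ _).2 fun u hu => ?_
  simpa [mem_ker.1 hu] using hSL g u

theorem disjoint_comap_orthogonal_ker_map_ker {S L J : E →ₗ[𝕜] E}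
    (hdef : ∀ w ∈ ker L, ⟪S (J w), w⟫ = 0 → w = 0) :
    Disjoint ((ker L)ᗮ.comap S) ((ker L).map J) := by
  refine disjoint_def.2 fun x hx hJ => ?_
  obtain ⟨w, hw, rfl⟩ := mem_map.1 hJ
  rw [hdef w hw (inner_eq_zero_symm.1 ((mem_orthogonal _ _).1 hx w hw)), map_zero]

theorem eq_zero_of_inner_eq_zero_of_coercive {c : ℝ} (hc : 0 < c) {x u : E}
    (hx : c * ‖u‖ ^ 2 ≤ RCLike.re ⟪x, u⟫) (hxu : ⟪x, u⟫ = 0) : u = 0 := by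
  rw [hxu, map_zero] at hx
  exact norm_eq_zero.1 (pow_eq_zero_iff two_ne_zero |>.1 <|
    le_antisymm (nonpos_of_mul_nonpos_right hx hc) (sq_nonneg _))

theorem mem_range_iff_apply_mem_orthogonal_ker [FiniteDimensional 𝕜 E] {S L J : E →ₗ[𝕜] E}
    (hSL : (S ∘ₗ L).IsSymmetric) (hJ : Function.Injective J)
    (hdef : ∀ w ∈ ker L, ⟪S (J w), w⟫ = 0 → w = 0) (f : E) :
    S f ∈ (ker L)ᗮ ↔ f ∈ range L := by
  have hdim : finrank 𝕜 (range L) + finrank 𝕜 ((ker L).map J) = finrank 𝕜 E := by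
    rw [← (equivMapOfInjective J hJ (ker L)).finrank_eq, finrank_range_add_finrank_ker]
  rw [eq_of_le_of_disjoint_of_finrank_add_eq hSL.range_le_comap_orthogonal_ker
    (disjoint_comap_orthogonal_ker_map_ker hdef) hdim]
  exact mem_comap.symm

end

/-- If SL is Hermitian, J invertible and Re(SJu,u) ≥ c|u|² on ker L, then for any
vector f, S f ⊥ ker L if and only if f ∈ range L. -/
theorem stmt_11 (N : ℕ)
    (L S J : EuclideanSpace ℂ (Fin N) →L[ℂ] EuclideanSpace ℂ (Fin N))
    (c : ℝ) (hc : 0 < c) (hJ : IsUnit J)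
    (hSL : IsSelfAdjoint (S * L))
    (hpos : ∀ u ∈ LinearMap.ker (L : EuclideanSpace ℂ (Fin N) →ₗ[ℂ] EuclideanSpace ℂ (Fin N)), c * ‖u‖ ^ 2 ≤ (inner ℂ (S (J u)) u : ℂ).re)
    (f : EuclideanSpace ℂ (Fin N)) :
    S f ∈ Submodule.orthogonal (LinearMap.ker (L : EuclideanSpace ℂ (Fin N) →ₗ[ℂ] EuclideanSpace ℂ (Fin N))) ↔ f ∈ LinearMap.range (L : EuclideanSpace ℂ (Fin N) →ₗ[ℂ] EuclideanSpace ℂ (Fin N)) :=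
  mem_range_iff_apply_mem_orthogonal_ker (S := S) (J := J) hSL.isSymmetric
    (ContinuousLinearEquiv.ofUnit hJ.unit).injective
    (fun w hw => eq_zero_of_inner_eq_zero_of_coercive hc (x := S (J w)) (hpos w hw)) f
end

section
/- Let SL be Hermitian, and let J₀, J₁ be matrices such that Jₜ = (1−t)J₀ + tJ₁ is invertible for all t ∈ [0,1], the restriction of S Jₜ to ker L is Hermitian for all t, (S J₀ u, u) ≥ c|u|² on ker L, and 0 is a semi-simple eigenvalue of Jₜ⁻¹L for all t ∈ [0,1). Then (S Jₜ u, u) ≥ (1−t)c|u|² for all u ∈ ker L and t ∈ [0,1]. -/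
/-!
Write `qₜ(u) = Re ⟪S Jₜ u, u⟫` for `u ∈ ker L`, a Hermitian form affine in `t`. Semi-simplicity
and a dimension count give `Jₜ (ker L) ⊕ range L = E`, so a vector of `ker L` in the radical of
`qₜ` is orthogonal to `S Jₜ (ker L)` and (as `SL` is Hermitian) to `S (range L)`, hence to all of
`range S`; coercivity of `q₀` forces it to vanish. Thus `qₜ` is nondegenerate for `t < 1`.
The minimum of `qₜ` over the unit sphere of `ker L` is continuous in `t` and positive at `t = 0`;
it could only reach `0` at a semidefinite form with a null vector, and such a vector lies in the
radical. So `qₜ` stays positive definite on `[0, 1)`, whence `q₁ ≥ 0` and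
`qₜ = (1 - t) q₀ + t q₁ ≥ (1 - t) c |u|²`.
-/

open Set Metric
open scoped InnerProductSpace ComplexConjugate

theorem LinearMap.map_ker_sup_range_eq_top {K V : Type*} [Field K] [AddCommGroup V] [Module K V]
    [FiniteDimensional K V] {L J : V →ₗ[K] V} (hJ : Function.Injective J)
    (h : ker L ⊓ (range L).comap J = ⊥) : (ker L).map J ⊔ range L = ⊤ := by
  refine Submodule.eq_top_of_disjoint _ _ ?_ ?_
  · rw [(Submodule.equivMapOfInjective J hJ _).symm.finrank_eq, add_comm,
      finrank_range_add_finrank_ker]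
  · rw [Submodule.disjoint_def]
    rintro _ ⟨k, hk, rfl⟩ hkL
    have hk' : k ∈ ker L ⊓ (range L).comap J := ⟨hk, hkL⟩
    rw [h, Submodule.mem_bot] at hk'
    rw [hk', map_zero]

theorem IsPreconnected.forall_pos_of_forall_ne_zero {α : Type*} [TopologicalSpace α]
    {I : Set ℝ} {s : Set α} (hI : IsPreconnected I) (hs : IsCompact s) {f : ℝ → α → ℝ}
    (hf : Continuous ↿f) {t₀ : ℝ} (ht₀ : t₀ ∈ I) (hpos : ∀ x ∈ s, 0 < f t₀ x)
    (hne : ∀ t ∈ I, (∀ x ∈ s, 0 ≤ f t x) → ∀ x ∈ s, f t x ≠ 0) :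
    ∀ t ∈ I, ∀ x ∈ s, 0 < f t x := by
  rcases s.eq_empty_or_nonempty with rfl | hs₀
  · simp
  have himage (t : ℝ) : IsCompact (f t '' s) := hs.image (hf.comp (.prodMk_right t))
  have hmin (t : ℝ) : ∃ x ∈ s, f t x = sInf (f t '' s) := (himage t).sInf_mem (hs₀.image _)
  have hle (t : ℝ) : ∀ x ∈ s, sInf (f t '' s) ≤ f t x :=
    fun x hx => csInf_le (himage t).bddBelow (mem_image_of_mem _ hx)
  intro t ht
  by_contra! hneg
  obtain ⟨x, hx, hfx⟩ := hneg
  obtain ⟨y, hy, hfy⟩ := hmin t₀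
  have hzero : (0 : ℝ) ∈ Icc (sInf (f t '' s)) (sInf (f t₀ '' s)) :=
    ⟨(hle t x hx).trans hfx, hfy ▸ (hpos y hy).le⟩
  obtain ⟨t', ht', hm⟩ :=
    hI.intermediate_value ht ht₀ (hs.continuous_sInf hf).continuousOn hzero
  obtain ⟨z, hz, hfz⟩ := hmin t'
  exact hne t' ht' (fun w hw => hm ▸ hle t' w hw) z hz (hfz.trans hm)

section Hermitian

variable {E : Type*} [NormedAddCommGroup E] [InnerProductSpace ℂ E]
  {F : Type*} [FunLike F E E] [LinearMapClass F ℂ E E]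

theorem exists_mem_sphere_re_inner_map_self_eq {K : Submodule ℂ E} (A : F) {x : E}
    (hxK : x ∈ K) (hx : x ≠ 0) :
    ∃ y ∈ (K : Set E) ∩ sphere 0 1, (⟪A x, x⟫_ℂ).re = ‖x‖ ^ 2 * (⟪A y, y⟫_ℂ).re := by
  have hnorm : ‖x‖ ≠ 0 := norm_ne_zero_iff.2 hx
  refine ⟨((‖x‖⁻¹ : ℝ) : ℂ) • x, ⟨K.smul_mem _ hxK, by simp [norm_smul, hnorm]⟩, ?_⟩
  simp only [map_smul, inner_smul_left, inner_smul_right, Complex.conj_ofReal, ← mul_assoc,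
    ← Complex.ofReal_mul, Complex.re_ofReal_mul]
  field_simp

theorem inner_map_eq_zero_of_re_inner_map_self_eq_zero {K : Submodule ℂ E} {A : F}
    (hsymm : ∀ u ∈ K, ∀ v ∈ K, ⟪A u, v⟫_ℂ = ⟪u, A v⟫_ℂ)
    (hnonneg : ∀ v ∈ K, 0 ≤ (⟪A v, v⟫_ℂ).re) {u : E} (hu : u ∈ K)
    (h0 : (⟪A u, u⟫_ℂ).re = 0) {v : E} (hv : v ∈ K) : ⟪A u, v⟫_ℂ = 0 := by
  have hre : ∀ w ∈ K, (⟪A u, w⟫_ℂ).re = 0 := by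
    intro w hw
    have hwu : ⟪A w, u⟫_ℂ = conj ⟪A u, w⟫_ℂ := by rw [hsymm w hw u hu, inner_conj_symm]
    have hquad :
        ∀ s : ℝ, 0 ≤ (⟪A w, w⟫_ℂ).re * (s * s) + 2 * (⟪A u, w⟫_ℂ).re * s + 0 := by
      intro s
      have := hnonneg (u + (s : ℂ) • w) (K.add_mem hu (K.smul_mem _ hw))
      simp only [map_add, map_smul, inner_add_left, inner_add_right, inner_smul_left,
        inner_smul_right, Complex.conj_ofReal, hwu, Complex.add_re, Complex.re_ofReal_mul,
        Complex.conj_re, h0] at this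
      linarith
    have hdisc := discrim_le_zero hquad
    rw [discrim] at hdisc
    nlinarith [sq_nonneg (⟪A u, w⟫_ℂ).re]
  refine Complex.ext (hre v hv) ?_
  simpa [inner_smul_right] using hre (Complex.I • v) (K.smul_mem _ hv)

theorem re_inner_apply_self_nonneg_of_mem_closure {I : Set ℝ} {K : Submodule ℂ E}
    {A : ℝ → E →L[ℂ] E} (hA : Continuous A)
    (hpos : ∀ t ∈ I, ∀ x ∈ K, x ≠ 0 → 0 < (⟪A t x, x⟫_ℂ).re) {t : ℝ} (ht : t ∈ closure I)
    {x : E} (hx : x ∈ K) : 0 ≤ (⟪A t x, x⟫_ℂ).re := by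
  rcases eq_or_ne x 0 with rfl | hx0
  · simp
  exact le_on_closure (f := fun _ => 0) (g := fun s => (⟪A s x, x⟫_ℂ).re)
    (fun s hs => (hpos s hs x hx hx0).le) continuousOn_const (by fun_prop) ht

variable [FiniteDimensional ℂ E]

theorem IsPreconnected.re_inner_apply_self_pos_of_nondegenerate {I : Set ℝ}
    (hI : IsPreconnected I) {K : Submodule ℂ E} {A : ℝ → E →L[ℂ] E} (hA : Continuous A)
    {t₀ : ℝ} (ht₀ : t₀ ∈ I)
    (hpos : ∀ x ∈ K, x ≠ 0 → 0 < (⟪A t₀ x, x⟫_ℂ).re)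
    (hsymm : ∀ t ∈ I, ∀ u ∈ K, ∀ v ∈ K, ⟪A t u, v⟫_ℂ = ⟪u, A t v⟫_ℂ)
    (hnondeg : ∀ t ∈ I, ∀ u ∈ K, (∀ v ∈ K, ⟪A t u, v⟫_ℂ = 0) → u = 0) :
    ∀ t ∈ I, ∀ x ∈ K, x ≠ 0 → 0 < (⟪A t x, x⟫_ℂ).re := by
  have hsphere : ∀ t ∈ I, ∀ y ∈ (K : Set E) ∩ sphere 0 1, 0 < (⟪A t y, y⟫_ℂ).re := by
    refine hI.forall_pos_of_forall_ne_zero ((isCompact_sphere 0 1).inter_left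
      K.closed_of_finiteDimensional) (by fun_prop) ht₀
      (fun y hy => hpos y hy.1 (ne_zero_of_mem_unit_sphere ⟨y, hy.2⟩))
      (fun t ht hnonneg y hy hy0 => ne_zero_of_mem_unit_sphere ⟨y, hy.2⟩ ?_)
    refine hnondeg t ht y hy.1 fun v hv =>
      inner_map_eq_zero_of_re_inner_map_self_eq_zero (hsymm t ht) (fun w hw => ?_) hy.1 hy0 hv
    rcases eq_or_ne w 0 with rfl | hw0
    · simp
    obtain ⟨z, hz, hwz⟩ := exists_mem_sphere_re_inner_map_self_eq (A t) hw hw0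
    exact hwz ▸ mul_nonneg (sq_nonneg _) (hnonneg z hz)
  intro t ht x hxK hx0
  obtain ⟨y, hy, hxy⟩ := exists_mem_sphere_re_inner_map_self_eq (A t) hxK hx0
  exact hxy ▸ mul_pos (by positivity) (hsphere t ht y hy)

theorem inner_apply_eq_zero_of_mem_radical_ker {L S J : E →L[ℂ] E}
    (hSL : IsSelfAdjoint (S * L)) (hJ : Function.Injective J)
    (hss : LinearMap.ker (L : E →ₗ[ℂ] E) ⊓
      (LinearMap.range (L : E →ₗ[ℂ] E)).comap (J : E →ₗ[ℂ] E) = ⊥)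
    {u : E} (hu : u ∈ LinearMap.ker (L : E →ₗ[ℂ] E))
    (hsym : ∀ v ∈ LinearMap.ker (L : E →ₗ[ℂ] E), ⟪S (J v), u⟫_ℂ = ⟪v, S (J u)⟫_ℂ)
    (hrad : ∀ v ∈ LinearMap.ker (L : E →ₗ[ℂ] E), ⟪S (J u), v⟫_ℂ = 0) (x : E) :
    ⟪S x, u⟫_ℂ = 0 := by
  have hx : x ∈ (LinearMap.ker (L : E →ₗ[ℂ] E)).map (J : E →ₗ[ℂ] E) ⊔
      LinearMap.range (L : E →ₗ[ℂ] E) := by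
    rw [LinearMap.map_ker_sup_range_eq_top hJ hss]; trivial
  obtain ⟨_, ⟨v, hv, rfl⟩, _, ⟨y, rfl⟩, rfl⟩ := Submodule.mem_sup.1 hx
  have hSLu : ⟪S (L y), u⟫_ℂ = 0 := by
    have hLu : L u = 0 := hu
    simpa [hLu] using hSL.isSymmetric y u
  have hSJv : ⟪S (J v), u⟫_ℂ = 0 := by
    rw [hsym v hv, ← inner_conj_symm, hrad v hv, map_zero]
  simp only [map_add, inner_add_left, ContinuousLinearMap.coe_coe, hSLu, hSJv, add_zero]

end Hermitian

/-- Positivity of a symmetrizer propagates along a segment of invertible matrices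
Jₜ = (1-t)J₀ + tJ₁ as long as 0 stays a semi-simple eigenvalue of Jₜ⁻¹L. -/
theorem stmt_12 (N : ℕ)
    (L S J₀ J₁ : EuclideanSpace ℂ (Fin N) →L[ℂ] EuclideanSpace ℂ (Fin N))
    (c : ℝ) (hc : 0 < c)
    (Jt : ℝ → (EuclideanSpace ℂ (Fin N) →L[ℂ] EuclideanSpace ℂ (Fin N)))
    (hJt : ∀ t : ℝ, Jt t = (((1 - t : ℝ)) : ℂ) • J₀ + ((t : ℝ) : ℂ) • J₁)
    (hSL : IsSelfAdjoint (S * L))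
    (hinv : ∀ t ∈ Set.Icc (0 : ℝ) 1, IsUnit (Jt t))
    (hsym : ∀ t ∈ Set.Icc (0 : ℝ) 1, ∀ u ∈ LinearMap.ker (L : EuclideanSpace ℂ (Fin N) →ₗ[ℂ] EuclideanSpace ℂ (Fin N)), ∀ v ∈ LinearMap.ker (L : EuclideanSpace ℂ (Fin N) →ₗ[ℂ] EuclideanSpace ℂ (Fin N)),
      (inner ℂ (S (Jt t u)) v : ℂ) = inner ℂ u (S (Jt t v)))
    (hpos0 : ∀ u ∈ LinearMap.ker (L : EuclideanSpace ℂ (Fin N) →ₗ[ℂ] EuclideanSpace ℂ (Fin N)), c * ‖u‖ ^ 2 ≤ (inner ℂ (S (J₀ u)) u : ℂ).re)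
    (hss : ∀ t ∈ Set.Ico (0 : ℝ) 1,
      LinearMap.ker (L : EuclideanSpace ℂ (Fin N) →ₗ[ℂ] EuclideanSpace ℂ (Fin N)) ⊓
        (LinearMap.range (L : EuclideanSpace ℂ (Fin N) →ₗ[ℂ] EuclideanSpace ℂ (Fin N))).comap
          (Jt t : EuclideanSpace ℂ (Fin N) →ₗ[ℂ] EuclideanSpace ℂ (Fin N)) = ⊥) :
    ∀ t ∈ Set.Icc (0 : ℝ) 1, ∀ u ∈ LinearMap.ker (L : EuclideanSpace ℂ (Fin N) →ₗ[ℂ] EuclideanSpace ℂ (Fin N)),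
      (1 - t) * c * ‖u‖ ^ 2 ≤ (inner ℂ (S (Jt t u)) u : ℂ).re := by
  set K := LinearMap.ker (L : EuclideanSpace ℂ (Fin N) →ₗ[ℂ] EuclideanSpace ℂ (Fin N))
  have hJ₀ : Jt 0 = J₀ := by ext x; simp [hJt]
  have hJ₁ : Jt 1 = J₁ := by ext x; simp [hJt]
  have hcoercive : ∀ x ∈ K, c * ‖x‖ ^ 2 ≤ (⟪S (Jt 0 x), x⟫_ℂ).re := hJ₀ ▸ hpos0
  have hnondeg : ∀ t ∈ Ico (0 : ℝ) 1, ∀ x ∈ K, (∀ v ∈ K, ⟪S (Jt t x), v⟫_ℂ = 0) → x = 0 := by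
    intro t ht x hxK hrad
    have htI : t ∈ Icc (0 : ℝ) 1 := Ico_subset_Icc_self ht
    have hinj : Function.Injective (Jt t) :=
      ((Module.End.isUnit_iff _).1 ((hinv t htI).map ContinuousLinearMap.toLinearMapRingHom)).1
    have hS := inner_apply_eq_zero_of_mem_radical_ker hSL hinj (hss t ht) hxK
      (fun v hv => hsym t htI v hv x hxK) hrad (J₀ x)
    have h := hpos0 x hxK
    rw [hS, Complex.zero_re] at h
    simpa [hc.ne'] using nonpos_of_mul_nonpos_right h hc
  have hcont : Continuous (S * Jt ·) := by simp only [hJt]; fun_prop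
  have hpd := isPreconnected_Ico.re_inner_apply_self_pos_of_nondegenerate hcont
    (left_mem_Ico.2 one_pos)
    (fun x hxK hx0 => (by positivity : 0 < c * ‖x‖ ^ 2).trans_le (hcoercive x hxK))
    (fun t ht => hsym t (Ico_subset_Icc_self ht)) hnondeg
  intro t ht u hu
  have h₁ : 0 ≤ (⟪S (J₁ u), u⟫_ℂ).re := hJ₁ ▸ re_inner_apply_self_nonneg_of_mem_closure hcont
    hpd (by rw [closure_Ico zero_ne_one]; exact right_mem_Icc.2 zero_le_one) hu
  have haffine : (⟪S (Jt t u), u⟫_ℂ).re =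
      (1 - t) * (⟪S (J₀ u), u⟫_ℂ).re + t * (⟪S (J₁ u), u⟫_ℂ).re := by
    simp only [hJt, add_apply, smul_apply, map_add, map_smul, inner_add_left, inner_smul_left,
      Complex.conj_ofReal, Complex.add_re, Complex.re_ofReal_mul]
  rw [haffine]
  nlinarith [mul_le_mul_of_nonneg_left (hpos0 u hu) (sub_nonneg.2 ht.2), mul_nonneg ht.1 h₁]
end

section
/- Let A depend Lipschitz-continuously on a parameter a with ‖A(a) − A(a′)‖ ≤ K|a − a′|, have only real eigenvalues, and have spectral projectors uniformly bounded by C. Then the eigenvalues λ₁(a) ≤ … ≤ λ_N(a), listed in increasing order with multiplicity, are Lipschitz functions of a with constant at most CK. -/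
/-!
Fix a parameter `a₀`, an eigenvalue `λ = λⱼ(a₀)` and the eigenprojector `P` of `A(a₀)` onto
`ker (A(a₀) - λ)` along `range (A(a₀) - λ)` (complementary subspaces by semisimplicity). If `v` is
an eigenvector of `A(a)` for `λ' = λⱼ(a)`, then `(λ' - λ) P v = P (A(a) - A(a₀)) v`, so
`|λ' - λ| ‖P v‖ ≤ C ‖A(a) - A(a₀)‖ ‖v‖`; and since `A(a₀) - λ` is injective on its range,
`‖v - P v‖ = O(|λ' - λ| + ‖A(a) - A(a₀)‖) ‖v‖`. The ordered eigenvalues are continuous (sorted roots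
of a characteristic polynomial depending continuously on `a`), so `‖P v‖ / ‖v‖ → 1` and `λⱼ` is
locally `(C + ε)K`-Lipschitz for every `ε > 0`. On a convex set this makes it globally
`CK`-Lipschitz.
-/

open Polynomial Filter Topology Set

theorem Monotone.eq_of_multiset_map_univ_eq {α : Type*} [PartialOrder α] {N : ℕ}
    {f g : Fin N → α} (hf : Monotone f) (hg : Monotone g)
    (h : Finset.univ.val.map f = Finset.univ.val.map g) : f = g := by
  rw [Fin.univ_val_map, Fin.univ_val_map, Multiset.coe_eq_coe] at h
  exact List.ofFn_injective (h.eq_of_sortedLE hf.sortedLE_ofFn hg.sortedLE_ofFn)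

theorem roots_prod_univ_X_sub_C {R : Type*} [CommRing R] [IsDomain R] {ι : Type*} [Fintype ι]
    (f : ι → R) : (∏ i, (X - C (f i))).roots = Finset.univ.val.map f := by
  have h := roots_multiset_prod_X_sub_C (Finset.univ.val.map f)
  rw [Multiset.map_map] at h
  exact h

theorem LinearMap.exists_isIdempotentElem_range_ker {K V : Type*} [Field K] [AddCommGroup V]
    [Module K V] [FiniteDimensional K V] (f : V →ₗ[K] V)
    (hf : LinearMap.ker f ⊓ LinearMap.range f = ⊥) :
    ∃ P : V →ₗ[K] V, IsIdempotentElem P ∧ LinearMap.range P = LinearMap.ker f ∧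
      LinearMap.ker P = LinearMap.range f := by
  have hc : IsCompl (LinearMap.ker f) (LinearMap.range f) :=
    (Submodule.isCompl_iff_disjoint _ _ (by rw [add_comm, f.finrank_range_add_finrank_ker])).2
      (disjoint_iff.2 hf)
  exact ⟨_, Submodule.isIdempotentElem_projection hc, Submodule.range_projection hc,
    Submodule.ker_projection hc⟩

theorem LinearMap.exists_norm_le_mul_norm_of_ker_inf_eq_bot {𝕜 E F : Type*}
    [NontriviallyNormedField 𝕜] [CompleteSpace 𝕜] [NormedAddCommGroup E] [NormedSpace 𝕜 E]
    [FiniteDimensional 𝕜 E] [NormedAddCommGroup F] [NormedSpace 𝕜 F] (f : E →ₗ[𝕜] F) {W : Submodule 𝕜 E}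
    (hW : LinearMap.ker f ⊓ W = ⊥) : ∃ κ ≥ (0 : ℝ), ∀ y ∈ W, ‖y‖ ≤ κ * ‖f y‖ := by
  have hker : LinearMap.ker (f ∘ₗ W.subtype) = ⊥ := by
    rw [LinearMap.ker_eq_bot']
    intro y hy
    have hmem : (y : E) ∈ LinearMap.ker f ⊓ W := Submodule.mem_inf.2 ⟨hy, y.2⟩
    rw [hW] at hmem
    exact Subtype.ext ((Submodule.mem_bot 𝕜).1 hmem)
  obtain ⟨κ, -, hκ⟩ := (f ∘ₗ W.subtype).exists_antilipschitzWith hker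
  exact ⟨κ, κ.2, fun y hy => hκ.le_mul_norm (map_zero _) ⟨y, hy⟩⟩

theorem norm_sub_le_of_eigenvector_of_proj {𝕜 E : Type*} [NontriviallyNormedField 𝕜]
    [NormedAddCommGroup E] [NormedSpace 𝕜 E] {T S P : E →L[𝕜] E} {z z' : 𝕜} {κ : ℝ} {v : E}
    (hP : IsIdempotentElem P) (hPT : ∀ y, P ((T - z • 1) y) = 0)
    (hTP : ∀ y, (T - z • 1) (P y) = 0) (hκ₀ : 0 ≤ κ)
    (hκ : ∀ y, P y = 0 → ‖y‖ ≤ κ * ‖(T - z • 1) y‖) (hv : v ≠ 0) (hSv : S v = z' • v) :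
    ‖z' - z‖ ≤ ‖P‖ * ‖S - T‖ + ‖z' - z‖ * (κ * (‖z' - z‖ + ‖S - T‖)) := by
  have hDv : (T - z • 1) v = (z' - z) • v - (S - T) v := by
    simp only [sub_apply, smul_apply, one_apply_eq_self, hSv, sub_smul]
    abel
  have hPv : ‖z' - z‖ * ‖P v‖ ≤ ‖P‖ * ‖S - T‖ * ‖v‖ := by
    have h : (z' - z) • P v = P ((S - T) v) := by
      have := hPT v
      rw [hDv, map_sub, map_smul] at this
      exact sub_eq_zero.1 this
    calc ‖z' - z‖ * ‖P v‖ = ‖P ((S - T) v)‖ := by rw [← h, norm_smul]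
      _ ≤ ‖P‖ * ‖S - T‖ * ‖v‖ := by
        rw [mul_assoc]
        exact P.le_opNorm_of_le ((S - T).le_opNorm v)
  have hQv : ‖v - P v‖ ≤ κ * (‖z' - z‖ + ‖S - T‖) * ‖v‖ := by
    have hker : P (v - P v) = 0 := by
      rw [map_sub, ← mul_apply_eq_comp, hP.eq, sub_self]
    have hD : (T - z • 1) (v - P v) = (T - z • 1) v := by rw [map_sub, hTP, sub_zero]
    calc ‖v - P v‖ ≤ κ * ‖(T - z • 1) v‖ := hD ▸ hκ _ hker
      _ ≤ κ * ((‖z' - z‖ + ‖S - T‖) * ‖v‖) := by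
        gcongr
        rw [hDv, add_mul, ← norm_smul]
        grw [norm_sub_le, (S - T).le_opNorm v]
      _ = _ := by ring
  have hvpos : 0 < ‖v‖ := norm_pos_iff.2 hv
  refine le_of_mul_le_mul_right ?_ hvpos
  calc ‖z' - z‖ * ‖v‖ ≤ ‖z' - z‖ * (‖P v‖ + ‖v - P v‖) := by
        gcongr
        simpa using norm_add_le (P v) (v - P v)
    _ ≤ _ := by
      rw [mul_add]
      have := mul_le_mul_of_nonneg_left hQv (norm_nonneg (z' - z))
      nlinarith

theorem exists_forall_eigenvector_norm_sub_le {𝕜 E : Type*} [NontriviallyNormedField 𝕜]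
    [CompleteSpace 𝕜] [NormedAddCommGroup E] [NormedSpace 𝕜 E] [FiniteDimensional 𝕜 E] {T : E →L[𝕜] E} {z : 𝕜}
    {C : ℝ}
    (hss : LinearMap.ker ((T - z • 1 : E →L[𝕜] E) : E →ₗ[𝕜] E) ⊓
      LinearMap.range ((T - z • 1 : E →L[𝕜] E) : E →ₗ[𝕜] E) = ⊥)
    (hproj : ∀ P : E →L[𝕜] E, P * P = P →
      LinearMap.range (P : E →ₗ[𝕜] E) = LinearMap.ker ((T - z • 1 : E →L[𝕜] E) : E →ₗ[𝕜] E) →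
      LinearMap.ker (P : E →ₗ[𝕜] E) = LinearMap.range ((T - z • 1 : E →L[𝕜] E) : E →ₗ[𝕜] E) →
      ‖P‖ ≤ C) :
    ∃ κ ≥ (0 : ℝ), ∀ (S : E →L[𝕜] E) (z' : 𝕜) (v : E), v ≠ 0 → S v = z' • v →
      ‖z' - z‖ ≤ C * ‖S - T‖ + ‖z' - z‖ * (κ * (‖z' - z‖ + ‖S - T‖)) := by
  obtain ⟨P₀, hP₀, hrange, hker⟩ := LinearMap.exists_isIdempotentElem_range_ker _ hss
  obtain ⟨κ, hκ₀, hκ⟩ := LinearMap.exists_norm_le_mul_norm_of_ker_inf_eq_bot _ hss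
  let P : E →L[𝕜] E := LinearMap.toContinuousLinearMap P₀
  have hP : IsIdempotentElem P := ContinuousLinearMap.coe_injective hP₀.eq
  have hPC : ‖P‖ ≤ C := hproj P hP.eq hrange hker
  refine ⟨κ, hκ₀, fun S z' v hv hSv => ?_⟩
  have key := norm_sub_le_of_eigenvector_of_proj (P := P) hP
    (fun y => LinearMap.mem_ker.1 (hker ▸ LinearMap.mem_range_self _ y))
    (fun y => LinearMap.mem_ker.1 (hrange ▸ LinearMap.mem_range_self P₀ y))
    hκ₀ (fun y hy => hκ y (hker ▸ hy)) hv hSv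
  grw [hPC] at key
  exact key

theorem abs_sub_le_mul_of_forall_eventually_nhdsGT {g : ℝ → ℝ} {a b M : ℝ} (hab : a ≤ b)
    (hg : ContinuousOn g (Icc a b))
    (hloc : ∀ x ∈ Ico a b, ∀ᶠ z in 𝓝[>] x, |g z - g x| ≤ M * (z - x)) :
    |g b - g a| ≤ M * (b - a) := by
  have upper : ∀ f : ℝ → ℝ, ContinuousOn f (Icc a b) →
      (∀ x ∈ Ico a b, ∀ᶠ z in 𝓝[>] x, f z - f x ≤ M * (z - x)) → f b ≤ f a + M * (b - a) := by
    intro f hf hfloc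
    refine image_le_of_liminf_slope_right_le_deriv_boundary hf (B := fun x => f a + M * (x - a))
      (B' := fun _ => M)
      (by simp) (by fun_prop) (fun x _ => ?_) (fun x hx r hr => ?_) ⟨hab, le_rfl⟩
    · simpa using ((hasDerivWithinAt_id x (Ici x)).sub_const a).const_mul M |>.const_add (f a)
    · refine ((hfloc x hx).and self_mem_nhdsWithin).frequently.mono fun z ⟨hz, hxz⟩ => ?_
      rw [slope_def_field, div_lt_iff₀ (sub_pos.2 hxz)]
      nlinarith [mul_lt_mul_of_pos_right hr (sub_pos.2 hxz)]
  rw [abs_sub_le_iff]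
  constructor
  · linarith [upper g hg fun x hx => (hloc x hx).mono fun z hz => (le_abs_self _).trans hz]
  · have := upper (fun x => -g x) hg.neg fun x hx => (hloc x hx).mono fun z hz =>
      (neg_le_abs _).trans_eq' (by ring) |>.trans hz
    linarith

theorem Convex.abs_sub_le_mul_norm_of_forall_eventually {F : Type*} [NormedAddCommGroup F]
    [NormedSpace ℝ F] {Ω : Set F} {f : F → ℝ} {M : ℝ} (hΩ : Convex ℝ Ω) (hf : ContinuousOn f Ω)
    (hloc : ∀ x ∈ Ω, ∀ᶠ y in 𝓝[Ω] x, |f y - f x| ≤ M * ‖y - x‖) {a a' : F} (ha : a ∈ Ω)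
    (ha' : a' ∈ Ω) : |f a' - f a| ≤ M * ‖a' - a‖ := by
  let γ : ℝ → F := fun t => a + t • (a' - a)
  have hγ : MapsTo γ (Icc 0 1) Ω := fun t ht => hΩ.add_smul_sub_mem ha ha' ht
  have hγc : Continuous γ := by fun_prop
  have hγsub : ∀ s t, γ s - γ t = (s - t) • (a' - a) := fun s t => by simp only [γ]; module
  have key := abs_sub_le_mul_of_forall_eventually_nhdsGT (g := f ∘ γ) (M := M * ‖a' - a‖)
    zero_le_one (hf.comp hγc.continuousOn hγ) fun x hx => ?_
  · simpa [γ] using key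
  have hγx : γ x ∈ Ω := hγ (Ico_subset_Icc_self hx)
  have hγt : Tendsto γ (𝓝[>] x) (𝓝[Ω] γ x) := by
    refine tendsto_nhdsWithin_iff.2 ⟨hγc.continuousAt.tendsto.mono_left nhdsWithin_le_nhds, ?_⟩
    filter_upwards [Ioo_mem_nhdsGT hx.2] with z hz using hγ ⟨hx.1.trans hz.1.le, hz.2.le⟩
  filter_upwards [hγt.eventually (hloc _ hγx), self_mem_nhdsWithin] with z hz hxz
  rw [hγsub, norm_smul, Real.norm_of_nonneg (sub_nonneg.2 (le_of_lt hxz))] at hz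
  calc |(f ∘ γ) z - (f ∘ γ) x| ≤ M * ((z - x) * ‖a' - a‖) := hz
    _ = M * ‖a' - a‖ * (z - x) := by ring

section OrderedEigenvalues

variable {E : Type*} [NormedAddCommGroup E] [NormedSpace ℂ E] [FiniteDimensional ℂ E] {N : ℕ}

def IsOrderedEigenvalues (T : E →L[ℂ] E) (μ : Fin N → ℝ) : Prop :=
  Monotone μ ∧ LinearMap.charpoly (T : E →ₗ[ℂ] E) = ∏ j, (X - C (μ j : ℂ))

theorem IsOrderedEigenvalues.unique {T : E →L[ℂ] E} {μ ν : Fin N → ℝ}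
    (hμ : IsOrderedEigenvalues T μ) (hν : IsOrderedEigenvalues T ν) : μ = ν := by
  have h := congrArg Polynomial.roots (hμ.2.symm.trans hν.2)
  rw [roots_prod_univ_X_sub_C, roots_prod_univ_X_sub_C] at h
  change Multiset.map (Complex.ofReal ∘ μ) _ = Multiset.map (Complex.ofReal ∘ ν) _ at h
  rw [← Multiset.map_map, ← Multiset.map_map] at h
  exact hμ.1.eq_of_multiset_map_univ_eq hν.1 (Multiset.map_injective Complex.ofReal_injective h)

theorem isOrderedEigenvalues_iff_det {T : E →L[ℂ] E} {μ : Fin N → ℝ} :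
    IsOrderedEigenvalues T μ ↔ Monotone μ ∧ ∀ c : ℂ, (c • 1 - T).det = ∏ j, (c - μ j) := by
  have hdet : ∀ c : ℂ, (c • 1 - T).det = (LinearMap.charpoly (T : E →ₗ[ℂ] E)).eval c := by
    intro c
    rw [LinearMap.eval_charpoly]
    rfl
  simp only [IsOrderedEigenvalues, hdet]
  refine and_congr_right fun _ => ⟨fun h c => by simp [h, eval_prod], fun h => ?_⟩
  exact Polynomial.funext fun c => by simp [h, eval_prod]

theorem IsOrderedEigenvalues.hasEigenvalue {T : E →L[ℂ] E} {μ : Fin N → ℝ}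
    (hμ : IsOrderedEigenvalues T μ) (k : Fin N) :
    Module.End.HasEigenvalue (T : E →ₗ[ℂ] E) (μ k) := by
  rw [Module.End.hasEigenvalue_iff_isRoot_charpoly, hμ.2, IsRoot, eval_prod]
  exact Finset.prod_eq_zero (Finset.mem_univ k) (by simp)

theorem IsOrderedEigenvalues.abs_le_norm {T : E →L[ℂ] E} {μ : Fin N → ℝ}
    (hμ : IsOrderedEigenvalues T μ) (k : Fin N) : |μ k| ≤ ‖T‖ := by
  obtain ⟨v, hv⟩ := (hμ.hasEigenvalue k).exists_hasEigenvector
  have h := T.le_opNorm v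
  rw [show T v = (μ k : ℂ) • v from hv.apply_eq_smul, norm_smul, Complex.norm_real,
    Real.norm_eq_abs] at h
  exact le_of_mul_le_mul_right h (norm_pos_iff.2 hv.2)

theorem continuousWithinAt_of_isOrderedEigenvalues {X : Type*} [TopologicalSpace X]
    {S : Set X} {x₀ : X} {A : X → E →L[ℂ] E} {μ : X → Fin N → ℝ}
    (hA : ContinuousWithinAt A S x₀) (hμ : ∀ x ∈ S, IsOrderedEigenvalues (A x) (μ x))
    (hx₀ : x₀ ∈ S) : ContinuousWithinAt μ S x₀ := by
  have hbdd : ∀ᶠ x in 𝓝[S] x₀, μ x ∈ Metric.closedBall 0 (‖A x₀‖ + 1) := by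
    filter_upwards [self_mem_nhdsWithin, hA.norm.eventually (gt_mem_nhds (lt_add_one ‖A x₀‖))]
      with x hx hnorm
    rw [mem_closedBall_zero_iff, pi_norm_le_iff_of_nonneg (by positivity)]
    exact fun k => ((hμ x hx).abs_le_norm k).trans hnorm.le
  refine (isCompact_closedBall _ _).tendsto_nhds_of_unique_mapClusterPt hbdd fun ν _ hν => ?_
  refine ((hμ x₀ hx₀).unique (isOrderedEigenvalues_iff_det.2 ⟨?_, fun c => ?_⟩)).symm
  · refine isClosed_monotone.mem_of_mapClusterPt hν ?_
    filter_upwards [self_mem_nhdsWithin] with x hx using (hμ x hx).1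
  · have hlim : Tendsto (fun x => ∏ j, (c - (μ x j : ℂ))) (𝓝[S] x₀) (𝓝 (c • 1 - A x₀).det) := by
      refine ((ContinuousLinearMap.continuous_det.tendsto _).comp
        (tendsto_const_nhds.sub hA)).congr' ?_
      filter_upwards [self_mem_nhdsWithin] with x hx
      exact (isOrderedEigenvalues_iff_det.1 (hμ x hx)).2 c
    have hcl : MapClusterPt (∏ j, (c - (ν j : ℂ))) (𝓝[S] x₀) fun x => ∏ j, (c - (μ x j : ℂ)) :=
      hν.continuousAt_comp (f := fun ν : Fin N → ℝ => ∏ j, (c - (ν j : ℂ)))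
        (continuous_finsetProd _ fun j _ => continuous_const.sub
          (Complex.continuous_ofReal.comp (continuous_apply j))).continuousAt
    exact (eq_of_nhds_neBot (hcl.clusterPt.mono hlim)).symm

theorem IsOrderedEigenvalues.eventually_abs_sub_le {X : Type*} [TopologicalSpace X]
    {S : Set X} {x₀ : X} {A : X → E →L[ℂ] E} {μ : X → Fin N → ℝ} {C r : ℝ} {j : Fin N}
    (hA : ContinuousWithinAt A S x₀) (hμ : ∀ x ∈ S, IsOrderedEigenvalues (A x) (μ x))
    (hx₀ : x₀ ∈ S)
    (hss : LinearMap.ker ((A x₀ - (μ x₀ j : ℂ) • 1 : E →L[ℂ] E) : E →ₗ[ℂ] E) ⊓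
      LinearMap.range ((A x₀ - (μ x₀ j : ℂ) • 1 : E →L[ℂ] E) : E →ₗ[ℂ] E) = ⊥)
    (hproj : ∀ P : E →L[ℂ] E, P * P = P →
      LinearMap.range (P : E →ₗ[ℂ] E) =
        LinearMap.ker ((A x₀ - (μ x₀ j : ℂ) • 1 : E →L[ℂ] E) : E →ₗ[ℂ] E) →
      LinearMap.ker (P : E →ₗ[ℂ] E) =
        LinearMap.range ((A x₀ - (μ x₀ j : ℂ) • 1 : E →L[ℂ] E) : E →ₗ[ℂ] E) → ‖P‖ ≤ C)
    (hC : 0 < C) (hCr : C < r) :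
    ∀ᶠ x in 𝓝[S] x₀, |μ x j - μ x₀ j| ≤ r * ‖A x - A x₀‖ := by
  obtain ⟨κ, -, hκ⟩ := exists_forall_eigenvector_norm_sub_le hss hproj
  have hd : Tendsto (fun x => |μ x j - μ x₀ j|) (𝓝[S] x₀) (𝓝 0) := by
    have := ((tendsto_pi_nhds.1 (continuousWithinAt_of_isOrderedEigenvalues hA hμ hx₀) j).sub_const
      (μ x₀ j)).abs
    rwa [sub_self, abs_zero] at this
  have he : Tendsto (fun x => ‖A x - A x₀‖) (𝓝[S] x₀) (𝓝 0) :=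
    tendsto_iff_norm_sub_tendsto_zero.1 hA
  have hsmall : ∀ᶠ x in 𝓝[S] x₀, κ * (|μ x j - μ x₀ j| + ‖A x - A x₀‖) < 1 - C / r := by
    refine ((hd.add he).const_mul κ).eventually (gt_mem_nhds ?_)
    rw [add_zero, mul_zero, sub_pos, div_lt_one (hC.trans hCr)]
    exact hCr
  filter_upwards [self_mem_nhdsWithin, hsmall] with x hx hxsmall
  obtain ⟨v, hv⟩ := ((hμ x hx).hasEigenvalue j).exists_hasEigenvector
  have key := hκ (A x) (μ x j) v hv.2 hv.apply_eq_smul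
  rw [← Complex.ofReal_sub, Complex.norm_real, Real.norm_eq_abs] at key
  have hr : 0 < r := hC.trans hCr
  have : |μ x j - μ x₀ j| * (C / r) ≤ C * ‖A x - A x₀‖ := by nlinarith [abs_nonneg (μ x j - μ x₀ j)]
  rw [mul_div_assoc', div_le_iff₀ hr] at this
  nlinarith

end OrderedEigenvalues

theorem stmt_13_general (n N : ℕ) (Ω : Set (EuclideanSpace ℝ (Fin n)))
    (hΩc : Convex ℝ Ω)
    (A : EuclideanSpace ℝ (Fin n) →
      (EuclideanSpace ℂ (Fin N) →L[ℂ] EuclideanSpace ℂ (Fin N)))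
    (K C : ℝ) (hC : 0 < C)
    (hLip : ∀ a ∈ Ω, ∀ a' ∈ Ω, ‖A a - A a'‖ ≤ K * ‖a - a'‖)
    (μ : EuclideanSpace ℝ (Fin n) → Fin N → ℝ)
    (hmono : ∀ a ∈ Ω, Monotone (μ a))
    (hchar : ∀ a ∈ Ω,
      LinearMap.charpoly
          ((A a : EuclideanSpace ℂ (Fin N) →ₗ[ℂ] EuclideanSpace ℂ (Fin N))) =
        ∏ j, (Polynomial.X - Polynomial.C ((μ a j : ℝ) : ℂ)))
    (hss : ∀ a ∈ Ω, ∀ z : ℂ,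
      LinearMap.ker ((A a - z • (1 : EuclideanSpace ℂ (Fin N) →L[ℂ] EuclideanSpace ℂ (Fin N)) : EuclideanSpace ℂ (Fin N) →ₗ[ℂ] EuclideanSpace ℂ (Fin N))) ⊓ LinearMap.range ((A a - z • (1 : EuclideanSpace ℂ (Fin N) →L[ℂ] EuclideanSpace ℂ (Fin N)) : EuclideanSpace ℂ (Fin N) →ₗ[ℂ] EuclideanSpace ℂ (Fin N))) = ⊥)
    (hproj : ∀ a ∈ Ω, ∀ z : ℂ,
      ∀ Pr : EuclideanSpace ℂ (Fin N) →L[ℂ] EuclideanSpace ℂ (Fin N),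
        Pr * Pr = Pr →
        LinearMap.range (Pr : EuclideanSpace ℂ (Fin N) →ₗ[ℂ] EuclideanSpace ℂ (Fin N)) = LinearMap.ker ((A a - z • (1 : EuclideanSpace ℂ (Fin N) →L[ℂ] EuclideanSpace ℂ (Fin N)) : EuclideanSpace ℂ (Fin N) →ₗ[ℂ] EuclideanSpace ℂ (Fin N))) →
        LinearMap.ker (Pr : EuclideanSpace ℂ (Fin N) →ₗ[ℂ] EuclideanSpace ℂ (Fin N)) = LinearMap.range ((A a - z • (1 : EuclideanSpace ℂ (Fin N) →L[ℂ] EuclideanSpace ℂ (Fin N)) : EuclideanSpace ℂ (Fin N) →ₗ[ℂ] EuclideanSpace ℂ (Fin N))) →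
        ‖Pr‖ ≤ C) :
    ∀ j, ∀ a ∈ Ω, ∀ a' ∈ Ω, |μ a j - μ a' j| ≤ C * K * ‖a - a'‖ := by
  intro j a ha a' ha'
  have hA : ContinuousOn A Ω :=
    (LipschitzOnWith.of_dist_le' fun x hx y hy => by
      simpa only [dist_eq_norm] using hLip x hx y hy).continuousOn
  have hμ : ∀ x ∈ Ω, IsOrderedEigenvalues (A x) (μ x) := fun x hx => ⟨hmono x hx, hchar x hx⟩
  have hμc : ContinuousOn (fun x => μ x j) Ω := fun x hx =>
    (continuous_apply j).continuousAt.comp_continuousWithinAt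
      (continuousWithinAt_of_isOrderedEigenvalues (hA x hx) hμ hx)
  have hr : ∀ r > C, |μ a j - μ a' j| ≤ r * K * ‖a - a'‖ := by
    intro r hCr
    refine hΩc.abs_sub_le_mul_norm_of_forall_eventually hμc (fun x hx => ?_) ha' ha
    filter_upwards [self_mem_nhdsWithin, IsOrderedEigenvalues.eventually_abs_sub_le (hA x hx) hμ hx
      (hss x hx _) (hproj x hx _) hC hCr] with y hy hle
    calc |μ y j - μ x j| ≤ r * ‖A y - A x‖ := hle
      _ ≤ r * (K * ‖y - x‖) := mul_le_mul_of_nonneg_left (hLip y hy x hx) (hC.trans hCr).le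
      _ = r * K * ‖y - x‖ := by ring
  refine ge_of_tendsto (x := 𝓝[>] C) ?_ (eventually_nhdsWithin_of_forall hr)
  exact ((continuous_id.mul continuous_const).mul continuous_const).tendsto C |>.mono_left
    nhdsWithin_le_nhds

/-- If A(a) is Lipschitz in a, with real semi-simple eigenvalues and uniformly
bounded spectral projectors, then the increasingly ordered eigenvalues are
Lipschitz functions of a with constant CK. -/
theorem stmt_13 (n N : ℕ) (Ω : Set (EuclideanSpace ℝ (Fin n)))
    (hΩo : IsOpen Ω) (hΩc : Convex ℝ Ω)
    (A : EuclideanSpace ℝ (Fin n) →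
      (EuclideanSpace ℂ (Fin N) →L[ℂ] EuclideanSpace ℂ (Fin N)))
    (K C : ℝ) (hK : 0 < K) (hC : 0 < C)
    (hLip : ∀ a ∈ Ω, ∀ a' ∈ Ω, ‖A a - A a'‖ ≤ K * ‖a - a'‖)
    (μ : EuclideanSpace ℝ (Fin n) → Fin N → ℝ)
    (hmono : ∀ a ∈ Ω, Monotone (μ a))
    (hchar : ∀ a ∈ Ω,
      LinearMap.charpoly
          ((A a : EuclideanSpace ℂ (Fin N) →ₗ[ℂ] EuclideanSpace ℂ (Fin N))) =
        ∏ j, (Polynomial.X - Polynomial.C ((μ a j : ℝ) : ℂ)))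
    (hss : ∀ a ∈ Ω, ∀ z : ℂ,
      LinearMap.ker ((A a - z • (1 : EuclideanSpace ℂ (Fin N) →L[ℂ] EuclideanSpace ℂ (Fin N)) : EuclideanSpace ℂ (Fin N) →ₗ[ℂ] EuclideanSpace ℂ (Fin N))) ⊓ LinearMap.range ((A a - z • (1 : EuclideanSpace ℂ (Fin N) →L[ℂ] EuclideanSpace ℂ (Fin N)) : EuclideanSpace ℂ (Fin N) →ₗ[ℂ] EuclideanSpace ℂ (Fin N))) = ⊥)
    (hproj : ∀ a ∈ Ω, ∀ z : ℂ,
      ∀ Pr : EuclideanSpace ℂ (Fin N) →L[ℂ] EuclideanSpace ℂ (Fin N),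
        Pr * Pr = Pr →
        LinearMap.range (Pr : EuclideanSpace ℂ (Fin N) →ₗ[ℂ] EuclideanSpace ℂ (Fin N)) = LinearMap.ker ((A a - z • (1 : EuclideanSpace ℂ (Fin N) →L[ℂ] EuclideanSpace ℂ (Fin N)) : EuclideanSpace ℂ (Fin N) →ₗ[ℂ] EuclideanSpace ℂ (Fin N))) →
        LinearMap.ker (Pr : EuclideanSpace ℂ (Fin N) →ₗ[ℂ] EuclideanSpace ℂ (Fin N)) = LinearMap.range ((A a - z • (1 : EuclideanSpace ℂ (Fin N) →L[ℂ] EuclideanSpace ℂ (Fin N)) : EuclideanSpace ℂ (Fin N) →ₗ[ℂ] EuclideanSpace ℂ (Fin N))) →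
        ‖Pr‖ ≤ C) :
    ∀ j, ∀ a ∈ Ω, ∀ a' ∈ Ω, |μ a j - μ a' j| ≤ C * K * ‖a - a'‖ :=
  stmt_13_general n N Ω hΩc A K C hC hLip μ hmono hchar hss hproj
end

section
/- Under the uniform strong hyperbolicity hypothesis, the spectral projector Π_Λ(a) onto the group Λ(a) of eigenvalues near a cluster satisfies the Lipschitz bound ‖Π_Λ(a) − Π_Λ(a′)‖ ≤ C K δ⁻¹ |a − a′|, where δ is the spectral gap separating the cluster from the rest of the spectrum. -/
/-!
Let `Q_a(μ)` be the eigenprojector of `A a` for the eigenvalue `μ`: it exists because the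
eigenvalues are semi-simple, and `‖Q_a(μ)‖ ≤ C`. The cluster projector is
`Π(a) = ∑_{μ near Λ} Q_a(μ)`. Inserting `1 = ∑_ν Q_{a'}(ν)` on the left and `1 = ∑_μ Q_a(μ)` on the
right, `Π(a) - Π(a')` becomes a sum of terms `± Q_{a'}(ν) Q_a(μ)` over the pairs where exactly one
of `ν`, `μ` is near `Λ`. Such a pair is `δ / 2` apart, because every eigenvalue stays within `δ / 4`
of the spectrum of `A a₀`, and `(ν - μ) Q_{a'}(ν) Q_a(μ) = Q_{a'}(ν) (A a' - A a) Q_a(μ)`. So each of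
the at most `N²` terms has norm at most `2 C² K ‖a - a'‖ / δ`.
-/

open LinearMap Finset

namespace Module.End

variable {K V : Type*} [Field K] [AddCommGroup V] [Module K V]

theorem ker_pow_le_ker_of_disjoint {g : End K V} (h : Disjoint (ker g) (range g)) :
    ∀ k : ℕ, ker (g ^ k) ≤ ker g
  | 0 => by simp [one_eq_id]
  | k + 1 => fun x hx => by
    have hgx : g x ∈ ker g := ker_pow_le_ker_of_disjoint h k (by
      simpa [pow_succ, mul_apply] using hx)
    exact h.le_bot ⟨hgx, mem_range_self g x⟩

theorem maxGenEigenspace_eq_eigenspace_of_disjoint {f : End K V} {μ : K}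
    (h : Disjoint (ker (f - μ • 1)) (range (f - μ • 1))) :
    f.maxGenEigenspace μ = f.eigenspace μ := by
  refine le_antisymm (fun x hx => ?_) (f.genEigenspace_le_maximal μ 1)
  obtain ⟨k, hk⟩ := (mem_maxGenEigenspace f μ x).1 hx
  rw [eigenspace_def]
  exact ker_pow_le_ker_of_disjoint h k hk

theorem iSup_eigenspace_eq_top_of_disjoint [IsAlgClosed K] [FiniteDimensional K V] {f : End K V}
    (h : ∀ μ : K, Disjoint (ker (f - μ • 1)) (range (f - μ • 1))) :
    ⨆ μ, f.eigenspace μ = ⊤ := by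
  simpa only [maxGenEigenspace_eq_eigenspace_of_disjoint (h _)] using
    iSup_maxGenEigenspace_eq_top f

theorem eigenspace_le_range_sub_smul {f : End K V} {μ ν : K} (h : μ ≠ ν) :
    f.eigenspace μ ≤ range (f - ν • 1) := fun x hx => by
  refine ⟨(μ - ν)⁻¹ • x, ?_⟩
  rw [mem_eigenspace_iff] at hx
  rw [map_smul, LinearMap.sub_apply, hx, LinearMap.smul_apply, one_apply, ← sub_smul, smul_smul,
    inv_mul_cancel₀ (sub_ne_zero.2 h), one_smul]

noncomputable def eigenvalueFinset [DecidableEq K] [FiniteDimensional K V] (f : End K V) :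
    Finset K :=
  f.charpoly.roots.toFinset

variable [DecidableEq K] [FiniteDimensional K V] {f : End K V}

theorem mem_eigenvalueFinset {μ : K} : μ ∈ f.eigenvalueFinset ↔ f.HasEigenvalue μ := by
  rw [eigenvalueFinset, Multiset.mem_toFinset, Polynomial.mem_roots f.charpoly_monic.ne_zero,
    hasEigenvalue_iff_isRoot_charpoly]

theorem card_eigenvalueFinset_le : #f.eigenvalueFinset ≤ finrank K V :=
  calc #f.eigenvalueFinset ≤ Multiset.card f.charpoly.roots := Multiset.toFinset_card_le _
    _ ≤ f.charpoly.natDegree := Polynomial.card_roots' _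
    _ = finrank K V := f.charpoly_natDegree

end Module.End

/-- Membership in the paper's eigenvalue group `Λ(a)` around the cluster `Λ`. -/
def NearCluster (Λ : Set ℝ) (r : ℝ) (z : ℂ) : Prop :=
  ∃ m ∈ Λ, |z.re - m| ≤ r

theorem le_norm_sub_of_nearCluster {Λ : Set ℝ} {E : ℝ → Prop} {δ : ℝ}
    (hgap : ∀ m ∈ Λ, ∀ ν : ℝ, E ν → ν ∉ Λ → δ ≤ |m - ν|) {z w : ℂ}
    (hz : NearCluster Λ (δ / 4) z) (hw : ¬ NearCluster Λ (δ / 4) w)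
    (hwE : ∃ ν : ℝ, E ν ∧ ‖w - ν‖ ≤ δ / 4) : δ / 2 ≤ ‖z - w‖ := by
  obtain ⟨m, hmΛ, hzm⟩ := hz
  obtain ⟨ν, hνE, hwν⟩ := hwE
  have hwν' : |w.re - ν| ≤ δ / 4 := by
    simpa using (Complex.abs_re_le_norm (w - ν)).trans hwν
  have hνΛ : ν ∉ Λ := fun h => hw ⟨ν, h, hwν'⟩
  have hzw : |z.re - w.re| ≤ ‖z - w‖ := by simpa using Complex.abs_re_le_norm (z - w)
  have h1 := abs_sub_le m z.re ν
  have h2 := abs_sub_le z.re w.re ν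
  rw [abs_sub_comm] at hzm
  linarith [hgap m hmΛ ν hνE hνΛ]

theorem le_norm_sub_of_nearCluster_iff_not {Λ : Set ℝ} {E : ℝ → Prop} {δ : ℝ}
    (hgap : ∀ m ∈ Λ, ∀ ν : ℝ, E ν → ν ∉ Λ → δ ≤ |m - ν|) {z w : ℂ}
    (hzE : ∃ ν : ℝ, E ν ∧ ‖z - ν‖ ≤ δ / 4) (hwE : ∃ ν : ℝ, E ν ∧ ‖w - ν‖ ≤ δ / 4)
    (h : NearCluster Λ (δ / 4) z ↔ ¬ NearCluster Λ (δ / 4) w) : δ / 2 ≤ ‖z - w‖ := by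
  by_cases hz : NearCluster Λ (δ / 4) z
  · exact le_norm_sub_of_nearCluster hgap hz (h.1 hz) hwE
  · rw [norm_sub_rev]
    exact le_norm_sub_of_nearCluster hgap (not_not.1 (mt h.2 hz)) hz hzE

theorem sum_filter_sub_sum_filter_eq {ι R : Type*} [Ring R] {S S' : Finset ι} {Q Q' : ι → R}
    (p : ι → Prop) [DecidablePred p] (hQ : ∑ i ∈ S, Q i = 1) (hQ' : ∑ j ∈ S', Q' j = 1) :
    ∑ i ∈ S with p i, Q i - ∑ j ∈ S' with p j, Q' j =
      ∑ j ∈ S', ∑ i ∈ S, ((if p i then Q' j * Q i else 0) - if p j then Q' j * Q i else 0) :=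
  calc _ = (∑ j ∈ S', Q' j) * (∑ i ∈ S with p i, Q i) -
        (∑ j ∈ S' with p j, Q' j) * ∑ i ∈ S, Q i := by rw [hQ, hQ', one_mul, mul_one]
    _ = _ := by
      simp only [sum_filter, sum_mul_sum, ← sum_sub_distrib, mul_ite, ite_mul, mul_zero, zero_mul]

section NormedAlgebra

variable {𝕜 R : Type*} [NormedField 𝕜] [NormedRing R] [NormedAlgebra 𝕜 R]

theorem norm_sub_mul_norm_mul_le {T T' Q Q' : R} {μ ν : 𝕜}
    (hQ' : Q' * T' = ν • Q') (hQ : T * Q = μ • Q) :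
    ‖ν - μ‖ * ‖Q' * Q‖ ≤ ‖Q'‖ * ‖T' - T‖ * ‖Q‖ := by
  have h : (ν - μ) • (Q' * Q) = Q' * (T' - T) * Q := by
    rw [mul_sub, sub_mul, mul_assoc Q' T, hQ, hQ', sub_smul, smul_mul_assoc, mul_smul_comm]
  calc ‖ν - μ‖ * ‖Q' * Q‖ = ‖Q' * (T' - T) * Q‖ := by rw [← h, norm_smul]
    _ ≤ ‖Q'‖ * ‖T' - T‖ * ‖Q‖ := (norm_mul_le _ _).trans (by gcongr; exact norm_mul_le _ _)

theorem norm_sum_filter_sub_sum_filter_le {T T' : R} {S S' : Finset 𝕜} {Q Q' : 𝕜 → R}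
    (p : 𝕜 → Prop) [DecidablePred p] {C d : ℝ} (hd : 0 < d)
    (hQ : ∑ μ ∈ S, Q μ = 1) (hQ' : ∑ ν ∈ S', Q' ν = 1)
    (hTQ : ∀ μ ∈ S, T * Q μ = μ • Q μ) (hQ'T' : ∀ ν ∈ S', Q' ν * T' = ν • Q' ν)
    (hQC : ∀ μ ∈ S, ‖Q μ‖ ≤ C) (hQ'C : ∀ ν ∈ S', ‖Q' ν‖ ≤ C)
    (hgap : ∀ ν ∈ S', ∀ μ ∈ S, (p ν ↔ ¬ p μ) → d ≤ ‖ν - μ‖) :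
    ‖∑ μ ∈ S with p μ, Q μ - ∑ ν ∈ S' with p ν, Q' ν‖ ≤ #S' * #S * (C ^ 2 * ‖T' - T‖ / d) := by
  have hcross : ∀ ν ∈ S', ∀ μ ∈ S, (p ν ↔ ¬ p μ) → ‖Q' ν * Q μ‖ ≤ C ^ 2 * ‖T' - T‖ / d := by
    intro ν hν μ hμ h
    have hC : 0 ≤ C := (norm_nonneg _).trans (hQC μ hμ)
    rw [le_div_iff₀ hd]
    calc ‖Q' ν * Q μ‖ * d ≤ ‖ν - μ‖ * ‖Q' ν * Q μ‖ := by
          rw [mul_comm]; gcongr; exact hgap ν hν μ hμ h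
      _ ≤ ‖Q' ν‖ * ‖T' - T‖ * ‖Q μ‖ := norm_sub_mul_norm_mul_le (hQ'T' ν hν) (hTQ μ hμ)
      _ ≤ C * ‖T' - T‖ * C := by gcongr; exacts [hQ'C ν hν, hQC μ hμ]
      _ = C ^ 2 * ‖T' - T‖ := by ring
  rw [sum_filter_sub_sum_filter_eq p hQ hQ']
  calc _ ≤ ∑ ν ∈ S', ∑ μ ∈ S,
        ‖(if p μ then Q' ν * Q μ else 0) - if p ν then Q' ν * Q μ else 0‖ :=
        (norm_sum_le _ _).trans (sum_le_sum fun ν _ => norm_sum_le _ _)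
    _ ≤ ∑ ν ∈ S', ∑ μ ∈ S, C ^ 2 * ‖T' - T‖ / d := by
      refine sum_le_sum fun ν hν => sum_le_sum fun μ hμ => ?_
      by_cases hpν : p ν <;> by_cases hpμ : p μ
      · simpa [hpν, hpμ] using by positivity
      · simpa [hpν, hpμ] using hcross ν hν μ hμ (by simp [hpν, hpμ])
      · simpa [hpν, hpμ] using hcross ν hν μ hμ (by simp [hpν, hpμ])
      · simpa [hpν, hpμ] using by positivity
    _ = #S' * #S * (C ^ 2 * ‖T' - T‖ / d) := by simp [sum_const, nsmul_eq_mul, mul_assoc]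

end NormedAlgebra

namespace ContinuousLinearMap

open Module.End

section NontriviallyNormedField

variable {𝕜 V : Type*} [NontriviallyNormedField 𝕜] [NormedAddCommGroup V] [NormedSpace 𝕜 V]

theorem coe_sub_smul_one (T : V →L[𝕜] V) (μ : 𝕜) :
    ((T - μ • 1 : V →L[𝕜] V) : V →ₗ[𝕜] V) = (T : V →ₗ[𝕜] V) - μ • 1 := by
  rw [toLinearMap_sub, toLinearMap_smul, toLinearMap_one]

structure IsSpectralProjection (T Q : V →L[𝕜] V) (μ : 𝕜) : Prop where
  mul_self : Q * Q = Q
  range_eq : range (Q : V →ₗ[𝕜] V) = ker ((T - μ • 1 : V →L[𝕜] V) : V →ₗ[𝕜] V)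
  ker_eq : ker (Q : V →ₗ[𝕜] V) = range ((T - μ • 1 : V →L[𝕜] V) : V →ₗ[𝕜] V)

theorem exists_isSpectralProjection [CompleteSpace 𝕜] [FiniteDimensional 𝕜 V] (T : V →L[𝕜] V)
    (μ : 𝕜) (h : Disjoint (ker ((T - μ • 1 : V →L[𝕜] V) : V →ₗ[𝕜] V))
      (range ((T - μ • 1 : V →L[𝕜] V) : V →ₗ[𝕜] V))) :
    ∃ Q, IsSpectralProjection T Q μ := by
  have hc : IsCompl (ker ((T - μ • 1 : V →L[𝕜] V) : V →ₗ[𝕜] V))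
      (range ((T - μ • 1 : V →L[𝕜] V) : V →ₗ[𝕜] V)) :=
    (Submodule.isCompl_iff_disjoint _ _ (by rw [add_comm, finrank_range_add_finrank_ker])).2 h
  exact ⟨LinearMap.toContinuousLinearMap (Submodule.projection _ _ hc),
    isIdempotentElem_toLinearMap_iff.1 (Submodule.isIdempotentElem_projection hc),
    Submodule.range_projection hc, Submodule.ker_projection hc⟩

namespace IsSpectralProjection

variable {T Q P : V →L[𝕜] V} {μ ν : 𝕜}

theorem apply_mem_eigenspace (hQ : IsSpectralProjection T Q μ) (x : V) :
    Q x ∈ eigenspace (T : V →ₗ[𝕜] V) μ := by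
  rw [eigenspace_def, ← coe_sub_smul_one, ← hQ.range_eq]
  exact mem_range_self _ x

theorem apply_eq_self (hQ : IsSpectralProjection T Q μ) {x : V}
    (hx : x ∈ eigenspace (T : V →ₗ[𝕜] V) μ) : Q x = x := by
  rw [eigenspace_def, ← coe_sub_smul_one, ← hQ.range_eq] at hx
  obtain ⟨y, rfl⟩ := hx
  exact DFunLike.congr_fun hQ.mul_self y

theorem apply_eq_zero (hQ : IsSpectralProjection T Q μ) {x : V}
    (hx : x ∈ eigenspace (T : V →ₗ[𝕜] V) ν) (h : ν ≠ μ) : Q x = 0 := by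
  change x ∈ ker (Q : V →ₗ[𝕜] V)
  rw [hQ.ker_eq, coe_sub_smul_one]
  exact eigenspace_le_range_sub_smul h hx

theorem operator_mul (hQ : IsSpectralProjection T Q μ) : T * Q = μ • Q := by
  ext x
  exact mem_eigenspace_iff.1 (hQ.apply_mem_eigenspace x)

theorem mul_operator (hQ : IsSpectralProjection T Q μ) : Q * T = μ • Q := by
  ext x
  have hx : (T - μ • 1) x ∈ ker (Q : V →ₗ[𝕜] V) := hQ.ker_eq ▸ mem_range_self _ x
  simpa [sub_eq_zero] using hx

theorem disjoint_ker_range (hQ : IsSpectralProjection T Q μ) :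
    Disjoint (ker ((T : V →ₗ[𝕜] V) - μ • 1)) (range ((T : V →ₗ[𝕜] V) - μ • 1)) := by
  rw [← coe_sub_smul_one, ← hQ.range_eq, ← hQ.ker_eq]
  exact (IsIdempotentElem.toLinearMap hQ.mul_self).isCompl.disjoint

theorem mul_eq_zero_of_le_ker (hQ : IsSpectralProjection T Q μ)
    (h : ker ((T - μ • 1 : V →L[𝕜] V) : V →ₗ[𝕜] V) ≤ ker (P : V →ₗ[𝕜] V)) : P * Q = 0 := by
  ext x
  refine h ?_
  rw [coe_sub_smul_one, ← eigenspace_def]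
  exact hQ.apply_mem_eigenspace x

theorem mul_eq_self_of_le_range (hQ : IsSpectralProjection T Q μ) (hP : P * P = P)
    (h : ker ((T - μ • 1 : V →L[𝕜] V) : V →ₗ[𝕜] V) ≤ range (P : V →ₗ[𝕜] V)) : P * Q = Q := by
  ext x
  obtain ⟨y, hy⟩ := h (hQ.range_eq ▸ mem_range_self (Q : V →ₗ[𝕜] V) x)
  change P (Q x) = Q x
  rw [← show P y = Q x from hy]
  exact DFunLike.congr_fun hP y

theorem sum_eq_one [IsAlgClosed 𝕜] [FiniteDimensional 𝕜 V] {Q : 𝕜 → V →L[𝕜] V} {S : Finset 𝕜}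
    (hQ : ∀ μ, IsSpectralProjection T (Q μ) μ)
    (hS : ∀ μ, HasEigenvalue (T : V →ₗ[𝕜] V) μ → μ ∈ S) :
    ∑ μ ∈ S, Q μ = 1 := by
  ext x
  rw [_root_.sum_apply, one_apply_eq_self]
  have hx : x ∈ ⨆ μ, eigenspace (T : V →ₗ[𝕜] V) μ := by
    rw [iSup_eigenspace_eq_top_of_disjoint fun μ => (hQ μ).disjoint_ker_range]
    trivial
  refine Submodule.iSup_induction (motive := fun x => ∑ μ ∈ S, Q μ x = x) _ hx
    (fun ν y hy => ?_) (by simp) (fun y z hy hz => by simp [hy, hz, sum_add_distrib])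
  by_cases hν : ν ∈ S
  · rw [sum_eq_single ν (fun μ _ h => (hQ μ).apply_eq_zero hy h.symm) (absurd hν),
      (hQ ν).apply_eq_self hy]
  · have : eigenspace (T : V →ₗ[𝕜] V) ν = ⊥ := by
      by_contra h
      exact hν (hS ν (hasEigenvalue_iff.2 h))
    rw [this, Submodule.mem_bot] at hy
    simp [hy]

theorem eq_sum_filter {Q : 𝕜 → V →L[𝕜] V} {S : Finset 𝕜} (p : 𝕜 → Prop) [DecidablePred p]
    (hQ : ∀ μ, IsSpectralProjection T (Q μ) μ) (hsum : ∑ μ ∈ S, Q μ = 1) (hP : P * P = P)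
    (hrange : ∀ μ ∈ S, p μ →
      ker ((T - μ • 1 : V →L[𝕜] V) : V →ₗ[𝕜] V) ≤ range (P : V →ₗ[𝕜] V))
    (hker : ∀ μ ∈ S, ¬ p μ →
      ker ((T - μ • 1 : V →L[𝕜] V) : V →ₗ[𝕜] V) ≤ ker (P : V →ₗ[𝕜] V)) :
    P = ∑ μ ∈ S with p μ, Q μ :=
  calc P = ∑ μ ∈ S, P * Q μ := by rw [← mul_sum, hsum, mul_one]
    _ = ∑ μ ∈ S, if p μ then Q μ else 0 := sum_congr rfl fun μ hμ => by
      split_ifs with h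
      exacts [(hQ μ).mul_eq_self_of_le_range hP (hrange μ hμ h),
        (hQ μ).mul_eq_zero_of_le_ker (hker μ hμ h)]
    _ = ∑ μ ∈ S with p μ, Q μ := (sum_filter _ _).symm

end IsSpectralProjection

end NontriviallyNormedField

variable {V : Type*} [NormedAddCommGroup V] [NormedSpace ℂ V] [FiniteDimensional ℂ V]

theorem eq_sum_filter_nearCluster {T P : V →L[ℂ] V} {Q : ℂ → V →L[ℂ] V} {Λ : Set ℝ} {r : ℝ}
    [DecidablePred (NearCluster Λ r)]
    (hQ : ∀ μ, IsSpectralProjection T (Q μ) μ)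
    (hreal : ∀ z : ℂ, HasEigenvalue (T : V →ₗ[ℂ] V) z → z.im = 0) (hP : P * P = P)
    (hrange : range (P : V →ₗ[ℂ] V) =
      ⨆ (lam : ℝ) (_ : ∃ mu ∈ Λ, |lam - mu| ≤ r),
        ker ((T - (lam : ℂ) • 1 : V →L[ℂ] V) : V →ₗ[ℂ] V))
    (hker : ker (P : V →ₗ[ℂ] V) =
      ⨆ (lam : ℝ) (_ : HasEigenvalue (T : V →ₗ[ℂ] V) lam ∧ ∀ mu ∈ Λ, r < |lam - mu|),
        ker ((T - (lam : ℂ) • 1 : V →L[ℂ] V) : V →ₗ[ℂ] V)) :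
    P = ∑ μ ∈ eigenvalueFinset (T : V →ₗ[ℂ] V) with NearCluster Λ r μ, Q μ := by
  refine IsSpectralProjection.eq_sum_filter _ hQ
    (IsSpectralProjection.sum_eq_one hQ fun μ => mem_eigenvalueFinset.2) hP ?_ ?_
  all_goals
    intro μ hμ hnear
    lift μ to ℝ using hreal μ (mem_eigenvalueFinset.1 hμ)
  · rw [hrange]
    exact le_iSup₂_of_le μ (by simpa [NearCluster] using hnear) le_rfl
  · rw [hker]
    refine le_iSup₂_of_le μ ⟨mem_eigenvalueFinset.1 hμ, ?_⟩ le_rfl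
    simpa [NearCluster] using hnear

end ContinuousLinearMap

open Module.End ContinuousLinearMap

theorem stmt_14_general (n N : ℕ) (Ω : Set (EuclideanSpace ℝ (Fin n)))
    (A : EuclideanSpace ℝ (Fin n) →
      (EuclideanSpace ℂ (Fin N) →L[ℂ] EuclideanSpace ℂ (Fin N)))
    (K Cproj δ : ℝ) (hδ : 0 < δ)
    (hLip : ∀ a ∈ Ω, ∀ a' ∈ Ω, ‖A a - A a'‖ ≤ K * ‖a - a'‖)
    (hreal : ∀ a ∈ Ω, ∀ z : ℂ,
      Module.End.HasEigenvalue
        ((A a : EuclideanSpace ℂ (Fin N) →ₗ[ℂ] EuclideanSpace ℂ (Fin N))) z →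
        z.im = 0)
    (hss : ∀ a ∈ Ω, ∀ z : ℂ,
      LinearMap.ker ((A a - z • (1 : EuclideanSpace ℂ (Fin N) →L[ℂ] EuclideanSpace ℂ (Fin N)) : EuclideanSpace ℂ (Fin N) →L[ℂ] EuclideanSpace ℂ (Fin N)) : EuclideanSpace ℂ (Fin N) →ₗ[ℂ] EuclideanSpace ℂ (Fin N)) ⊓ LinearMap.range ((A a - z • (1 : EuclideanSpace ℂ (Fin N) →L[ℂ] EuclideanSpace ℂ (Fin N)) : EuclideanSpace ℂ (Fin N) →L[ℂ] EuclideanSpace ℂ (Fin N)) : EuclideanSpace ℂ (Fin N) →ₗ[ℂ] EuclideanSpace ℂ (Fin N)) = ⊥)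
    (hproj : ∀ a ∈ Ω, ∀ z : ℂ,
      ∀ Pr : EuclideanSpace ℂ (Fin N) →L[ℂ] EuclideanSpace ℂ (Fin N),
        Pr * Pr = Pr →
        LinearMap.range (Pr : EuclideanSpace ℂ (Fin N) →ₗ[ℂ] EuclideanSpace ℂ (Fin N)) = LinearMap.ker ((A a - z • (1 : EuclideanSpace ℂ (Fin N) →L[ℂ] EuclideanSpace ℂ (Fin N)) : EuclideanSpace ℂ (Fin N) →L[ℂ] EuclideanSpace ℂ (Fin N)) : EuclideanSpace ℂ (Fin N) →ₗ[ℂ] EuclideanSpace ℂ (Fin N)) →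
        LinearMap.ker (Pr : EuclideanSpace ℂ (Fin N) →ₗ[ℂ] EuclideanSpace ℂ (Fin N)) = LinearMap.range ((A a - z • (1 : EuclideanSpace ℂ (Fin N) →L[ℂ] EuclideanSpace ℂ (Fin N)) : EuclideanSpace ℂ (Fin N) →L[ℂ] EuclideanSpace ℂ (Fin N)) : EuclideanSpace ℂ (Fin N) →ₗ[ℂ] EuclideanSpace ℂ (Fin N)) →
        ‖Pr‖ ≤ Cproj)
    (a₀ : EuclideanSpace ℝ (Fin n))
    (Λ : Set ℝ)
    (hgap : ∀ lam ∈ Λ, ∀ lam' : ℝ,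
      Module.End.HasEigenvalue
        ((A a₀ : EuclideanSpace ℂ (Fin N) →ₗ[ℂ] EuclideanSpace ℂ (Fin N)))
        ((lam' : ℝ) : ℂ) →
      lam' ∉ Λ → δ ≤ |lam - lam'|)
    (ω : Set (EuclideanSpace ℝ (Fin n))) (hωΩ : ω ⊆ Ω)
    (hmove : ∀ a ∈ ω, ∀ z : ℂ,
      Module.End.HasEigenvalue
        ((A a : EuclideanSpace ℂ (Fin N) →ₗ[ℂ] EuclideanSpace ℂ (Fin N))) z →
      ∃ lam : ℝ,
        Module.End.HasEigenvalue
          ((A a₀ : EuclideanSpace ℂ (Fin N) →ₗ[ℂ] EuclideanSpace ℂ (Fin N)))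
          ((lam : ℝ) : ℂ) ∧ ‖z - (lam : ℂ)‖ ≤ δ / 4)
    (P : EuclideanSpace ℝ (Fin n) →
      (EuclideanSpace ℂ (Fin N) →L[ℂ] EuclideanSpace ℂ (Fin N)))
    (hPidem : ∀ a ∈ ω, P a * P a = P a)
    (hPrange : ∀ a ∈ ω,
      LinearMap.range (P a : EuclideanSpace ℂ (Fin N) →ₗ[ℂ] EuclideanSpace ℂ (Fin N)) =
        ⨆ (lam : ℝ) (_ : ∃ mu ∈ Λ, |lam - mu| ≤ δ / 4),
          LinearMap.ker ((A a - ((lam : ℝ) : ℂ) • (1 : EuclideanSpace ℂ (Fin N) →L[ℂ] EuclideanSpace ℂ (Fin N)) :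
            EuclideanSpace ℂ (Fin N) →L[ℂ] EuclideanSpace ℂ (Fin N)) : EuclideanSpace ℂ (Fin N) →ₗ[ℂ] EuclideanSpace ℂ (Fin N)))
    (hPker : ∀ a ∈ ω,
      LinearMap.ker (P a : EuclideanSpace ℂ (Fin N) →ₗ[ℂ] EuclideanSpace ℂ (Fin N)) =
        ⨆ (lam : ℝ) (_ :
          Module.End.HasEigenvalue
            ((A a : EuclideanSpace ℂ (Fin N) →ₗ[ℂ] EuclideanSpace ℂ (Fin N)))
            ((lam : ℝ) : ℂ) ∧ ∀ mu ∈ Λ, δ / 4 < |lam - mu|),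
          LinearMap.ker ((A a - ((lam : ℝ) : ℂ) • (1 : EuclideanSpace ℂ (Fin N) →L[ℂ] EuclideanSpace ℂ (Fin N)) :
            EuclideanSpace ℂ (Fin N) →L[ℂ] EuclideanSpace ℂ (Fin N)) : EuclideanSpace ℂ (Fin N) →ₗ[ℂ] EuclideanSpace ℂ (Fin N))) :
    ∃ C' : ℝ, 0 < C' ∧
      ∀ a ∈ ω, ∀ a' ∈ ω, ‖P a - P a'‖ ≤ C' * K * δ⁻¹ * ‖a - a'‖ := by
  classical
  choose! Q hQ using fun a (ha : a ∈ Ω) (μ : ℂ) =>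
    exists_isSpectralProjection (A a) μ (disjoint_iff.2 (hss a ha μ))
  have hQC : ∀ a ∈ Ω, ∀ μ, ‖Q a μ‖ ≤ Cproj := fun a ha μ =>
    hproj a ha μ _ (hQ a ha μ).mul_self (hQ a ha μ).range_eq (hQ a ha μ).ker_eq
  set S : EuclideanSpace ℝ (Fin n) → Finset ℂ := fun a =>
    eigenvalueFinset (A a : EuclideanSpace ℂ (Fin N) →ₗ[ℂ] EuclideanSpace ℂ (Fin N))
  have hsum : ∀ a ∈ Ω, ∑ μ ∈ S a, Q a μ = 1 := fun a ha =>
    IsSpectralProjection.sum_eq_one (hQ a ha) fun _ => mem_eigenvalueFinset.2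
  have hP : ∀ a ∈ ω, P a = ∑ μ ∈ S a with NearCluster Λ (δ / 4) μ, Q a μ := fun a ha =>
    eq_sum_filter_nearCluster (hQ a (hωΩ ha)) (hreal a (hωΩ ha))
      (hPidem a ha) (hPrange a ha) (hPker a ha)
  refine ⟨2 * N ^ 2 * Cproj ^ 2 + 1, by positivity, fun a ha a' ha' => ?_⟩
  have hΩ := hωΩ ha
  have hΩ' := hωΩ ha'
  have hLip' : ‖A a' - A a‖ ≤ K * ‖a - a'‖ := norm_sub_rev a a' ▸ hLip a' hΩ' a hΩ
  calc ‖P a - P a'‖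
      ≤ #(S a') * #(S a) * (Cproj ^ 2 * ‖A a' - A a‖ / (δ / 2)) := by
        rw [hP a ha, hP a' ha']
        exact norm_sum_filter_sub_sum_filter_le _ (by positivity) (hsum a hΩ) (hsum a' hΩ')
          (fun μ _ => (hQ a hΩ μ).operator_mul) (fun ν _ => (hQ a' hΩ' ν).mul_operator)
          (fun μ _ => hQC a hΩ μ) (fun ν _ => hQC a' hΩ' ν) fun ν hν μ hμ =>
          le_norm_sub_of_nearCluster_iff_not hgap (hmove a' ha' ν (mem_eigenvalueFinset.1 hν))
            (hmove a ha μ (mem_eigenvalueFinset.1 hμ))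
    _ ≤ N * N * (Cproj ^ 2 * (K * ‖a - a'‖) / (δ / 2)) := by
        gcongr <;> exact card_eigenvalueFinset_le.trans_eq finrank_euclideanSpace_fin
    _ = 2 * N ^ 2 * Cproj ^ 2 * (K * ‖a - a'‖ * δ⁻¹) := by field_simp
    _ ≤ (2 * N ^ 2 * Cproj ^ 2 + 1) * K * δ⁻¹ * ‖a - a'‖ := by
        have : 0 ≤ K * ‖a - a'‖ * δ⁻¹ := mul_nonneg ((norm_nonneg _).trans hLip') (by positivity)
        linarith

/-- Lipschitz dependence of the spectral projector onto a cluster of eigenvalues,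
with constant proportional to K/δ, δ being the spectral gap isolating the cluster. -/
theorem stmt_14 (n N : ℕ) (Ω : Set (EuclideanSpace ℝ (Fin n)))
    (A : EuclideanSpace ℝ (Fin n) →
      (EuclideanSpace ℂ (Fin N) →L[ℂ] EuclideanSpace ℂ (Fin N)))
    (K Cproj δ : ℝ) (hK : 0 < K) (hC : 0 < Cproj) (hδ : 0 < δ)
    (hLip : ∀ a ∈ Ω, ∀ a' ∈ Ω, ‖A a - A a'‖ ≤ K * ‖a - a'‖)
    (hreal : ∀ a ∈ Ω, ∀ z : ℂ,
      Module.End.HasEigenvalue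
        ((A a : EuclideanSpace ℂ (Fin N) →ₗ[ℂ] EuclideanSpace ℂ (Fin N))) z →
        z.im = 0)
    (hss : ∀ a ∈ Ω, ∀ z : ℂ,
      LinearMap.ker ((A a - z • (1 : EuclideanSpace ℂ (Fin N) →L[ℂ] EuclideanSpace ℂ (Fin N)) : EuclideanSpace ℂ (Fin N) →L[ℂ] EuclideanSpace ℂ (Fin N)) : EuclideanSpace ℂ (Fin N) →ₗ[ℂ] EuclideanSpace ℂ (Fin N)) ⊓ LinearMap.range ((A a - z • (1 : EuclideanSpace ℂ (Fin N) →L[ℂ] EuclideanSpace ℂ (Fin N)) : EuclideanSpace ℂ (Fin N) →L[ℂ] EuclideanSpace ℂ (Fin N)) : EuclideanSpace ℂ (Fin N) →ₗ[ℂ] EuclideanSpace ℂ (Fin N)) = ⊥)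
    (hproj : ∀ a ∈ Ω, ∀ z : ℂ,
      ∀ Pr : EuclideanSpace ℂ (Fin N) →L[ℂ] EuclideanSpace ℂ (Fin N),
        Pr * Pr = Pr →
        LinearMap.range (Pr : EuclideanSpace ℂ (Fin N) →ₗ[ℂ] EuclideanSpace ℂ (Fin N)) = LinearMap.ker ((A a - z • (1 : EuclideanSpace ℂ (Fin N) →L[ℂ] EuclideanSpace ℂ (Fin N)) : EuclideanSpace ℂ (Fin N) →L[ℂ] EuclideanSpace ℂ (Fin N)) : EuclideanSpace ℂ (Fin N) →ₗ[ℂ] EuclideanSpace ℂ (Fin N)) →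
        LinearMap.ker (Pr : EuclideanSpace ℂ (Fin N) →ₗ[ℂ] EuclideanSpace ℂ (Fin N)) = LinearMap.range ((A a - z • (1 : EuclideanSpace ℂ (Fin N) →L[ℂ] EuclideanSpace ℂ (Fin N)) : EuclideanSpace ℂ (Fin N) →L[ℂ] EuclideanSpace ℂ (Fin N)) : EuclideanSpace ℂ (Fin N) →ₗ[ℂ] EuclideanSpace ℂ (Fin N)) →
        ‖Pr‖ ≤ Cproj)
    (a₀ : EuclideanSpace ℝ (Fin n)) (ha₀ : a₀ ∈ Ω)
    (Λ : Set ℝ)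
    (hΛ : ∀ lam ∈ Λ,
      Module.End.HasEigenvalue
        ((A a₀ : EuclideanSpace ℂ (Fin N) →ₗ[ℂ] EuclideanSpace ℂ (Fin N)))
        ((lam : ℝ) : ℂ))
    (hgap : ∀ lam ∈ Λ, ∀ lam' : ℝ,
      Module.End.HasEigenvalue
        ((A a₀ : EuclideanSpace ℂ (Fin N) →ₗ[ℂ] EuclideanSpace ℂ (Fin N)))
        ((lam' : ℝ) : ℂ) →
      lam' ∉ Λ → δ ≤ |lam - lam'|)
    (ω : Set (EuclideanSpace ℝ (Fin n))) (hωΩ : ω ⊆ Ω) (hωnhd : ω ∈ nhds a₀)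
    (hmove : ∀ a ∈ ω, ∀ z : ℂ,
      Module.End.HasEigenvalue
        ((A a : EuclideanSpace ℂ (Fin N) →ₗ[ℂ] EuclideanSpace ℂ (Fin N))) z →
      ∃ lam : ℝ,
        Module.End.HasEigenvalue
          ((A a₀ : EuclideanSpace ℂ (Fin N) →ₗ[ℂ] EuclideanSpace ℂ (Fin N)))
          ((lam : ℝ) : ℂ) ∧ ‖z - (lam : ℂ)‖ ≤ δ / 4)
    (P : EuclideanSpace ℝ (Fin n) →
      (EuclideanSpace ℂ (Fin N) →L[ℂ] EuclideanSpace ℂ (Fin N)))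
    (hPidem : ∀ a ∈ ω, P a * P a = P a)
    (hPrange : ∀ a ∈ ω,
      LinearMap.range (P a : EuclideanSpace ℂ (Fin N) →ₗ[ℂ] EuclideanSpace ℂ (Fin N)) =
        ⨆ (lam : ℝ) (_ : ∃ mu ∈ Λ, |lam - mu| ≤ δ / 4),
          LinearMap.ker ((A a - ((lam : ℝ) : ℂ) • (1 : EuclideanSpace ℂ (Fin N) →L[ℂ] EuclideanSpace ℂ (Fin N)) :
            EuclideanSpace ℂ (Fin N) →L[ℂ] EuclideanSpace ℂ (Fin N)) : EuclideanSpace ℂ (Fin N) →ₗ[ℂ] EuclideanSpace ℂ (Fin N)))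
    (hPker : ∀ a ∈ ω,
      LinearMap.ker (P a : EuclideanSpace ℂ (Fin N) →ₗ[ℂ] EuclideanSpace ℂ (Fin N)) =
        ⨆ (lam : ℝ) (_ :
          Module.End.HasEigenvalue
            ((A a : EuclideanSpace ℂ (Fin N) →ₗ[ℂ] EuclideanSpace ℂ (Fin N)))
            ((lam : ℝ) : ℂ) ∧ ∀ mu ∈ Λ, δ / 4 < |lam - mu|),
          LinearMap.ker ((A a - ((lam : ℝ) : ℂ) • (1 : EuclideanSpace ℂ (Fin N) →L[ℂ] EuclideanSpace ℂ (Fin N)) :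
            EuclideanSpace ℂ (Fin N) →L[ℂ] EuclideanSpace ℂ (Fin N)) : EuclideanSpace ℂ (Fin N) →ₗ[ℂ] EuclideanSpace ℂ (Fin N))) :
    ∃ C' : ℝ, 0 < C' ∧
      ∀ a ∈ ω, ∀ a' ∈ ω, ‖P a - P a'‖ ≤ C' * K * δ⁻¹ * ‖a - a'‖ :=
  stmt_14_general n N Ω A K Cproj δ hδ hLip hreal hss hproj a₀ Λ hgap ω hωΩ hmove P hPidem hPrange
    hPker
end

section
/- (Key combinatorial matrix lemma) Let S₁,…,S_m and p₁,…,p_m be matrices and μ₁,…,μ_m distinct real numbers with ‖Sⱼ‖ ≤ K₁, ‖Sⱼ − Sₖ‖ ≤ K₁|μⱼ − μₖ|, and for every proper nonempty subset J ⊂ {1,…,m}, ‖Σ_{j∈J} pⱼ‖ ≤ K₂ ε (min_{j∈J, k∉J} |μⱼ − μₖ|)⁻¹, and Σⱼ pⱼ = 0. Then ‖Σⱼ Sⱼ pⱼ‖ ≤ C_m K₁ K₂ ε, where C_m depends only on m. -/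
/-!
Order the indices so that `μ` increases. Abel summation, together with `∑ pⱼ = 0`, writes
`∑ Sⱼ pⱼ` as minus the sum over `i < m - 1` of `(S_{i+1} - S_i) P_i`, where `P_i` is the sum of the
`pⱼ` over the set `J` of the `i + 1` lowest indices. The gap `μ_{i+1} - μ_i` is at most `|μⱼ - μₖ|` for any
`j ∈ J`, `k ∉ J`, so each term has norm at most `K₁ K₂ ε`, and `C_m = m` works.
-/

open Finset

theorem Fin.sum_univ_mul_by_parts {R : Type*} [Ring R] {n : ℕ} (f g : Fin (n + 1) → R) :
    ∑ i, f i * g i = f (Fin.last n) * ∑ i, g i -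
      ∑ i : Fin n, (f i.succ - f i.castSucc) * ∑ j ∈ Iic i.castSucc, g j := by
  induction n with
  | zero => simp
  | succ n ih =>
    have hIic (i : Fin (n + 1)) :
        ∑ j ∈ Iic i.castSucc, g j = ∑ j ∈ Iic i, g j.castSucc := by
      rw [← Fin.map_castSuccEmb_Iic, sum_map]
      rfl
    have hlast : ∑ j ∈ Iic (Fin.last n), g j.castSucc = ∑ i : Fin (n + 1), g i.castSucc := by
      rw [← Fin.top_eq_last, Iic_top]
    rw [Fin.sum_univ_castSucc (fun i => f i * g i), ih, Fin.sum_univ_castSucc g,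
      Fin.sum_univ_castSucc (fun i : Fin (n + 1) => _ * ∑ j ∈ Iic i.castSucc, g j)]
    simp only [hIic, hlast, Fin.succ_last, Fin.succ_castSucc]
    noncomm_ring

theorem norm_sum_mul_le_of_sum_eq_zero {R : Type*} [SeminormedRing R] {n : ℕ}
    (f g : Fin (n + 1) → R) (hg : ∑ i, g i = 0) {C : ℝ}
    (h : ∀ i : Fin n, ‖f i.succ - f i.castSucc‖ * ‖∑ j ∈ Iic i.castSucc, g j‖ ≤ C) :
    ‖∑ i, f i * g i‖ ≤ n * C := by
  rw [Fin.sum_univ_mul_by_parts, hg, mul_zero, zero_sub, norm_neg]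
  calc _ ≤ ∑ i : Fin n, ‖(f i.succ - f i.castSucc) * ∑ j ∈ Iic i.castSucc, g j‖ :=
        norm_sum_le _ _
    _ ≤ ∑ _i : Fin n, C := sum_le_sum fun i _ => (norm_mul_le _ _).trans (h i)
    _ = n * C := by simp

theorem Monotone.abs_sub_le_abs_sub {α : Type*} [Preorder α] {v : α → ℝ} (hv : Monotone v)
    {a x y b : α} (hax : a ≤ x) (hxy : x ≤ y) (hyb : y ≤ b) : |v y - v x| ≤ |v a - v b| := by
  rw [abs_of_nonneg (sub_nonneg.2 (hv hxy)), abs_sub_comm,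
    abs_of_nonneg (sub_nonneg.2 (hv ((hax.trans hxy).trans hyb)))]
  linarith [hv hax, hv hyb]

theorem norm_sum_Iic_mul_gap_le {E : Type*} [SeminormedAddCommGroup E] {n : ℕ}
    {p : Fin (n + 1) → E} {μ : Fin (n + 1) → ℝ} {c : ℝ} (σ : Equiv.Perm (Fin (n + 1)))
    (hσ : Monotone (μ ∘ σ))
    (hp : ∀ J : Finset (Fin (n + 1)), J.Nonempty → J ≠ univ →
      ∃ j ∈ J, ∃ k, k ∉ J ∧ ‖∑ i ∈ J, p i‖ * |μ j - μ k| ≤ c) (i : Fin n) :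
    ‖∑ j ∈ Iic i.castSucc, p (σ j)‖ * |μ (σ i.succ) - μ (σ i.castSucc)| ≤ c := by
  set J := (Iic i.castSucc).map σ.toEmbedding
  have hsum : ∑ j ∈ Iic i.castSucc, p (σ j) = ∑ k ∈ J, p k := by
    rw [sum_map]
    rfl
  have hsucc : σ i.succ ∉ J := by simp [J]
  have hJ : J.Nonempty := ⟨σ i.castSucc, mem_map_of_mem _ (mem_Iic.2 le_rfl)⟩
  obtain ⟨j, hj, k, hk, hjk⟩ := hp J hJ fun h => hsucc (h ▸ mem_univ _)
  obtain ⟨a, ha, rfl⟩ := mem_map.1 hj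
  have hk' : i.succ ≤ σ.symm k := by
    rw [← Fin.castSucc_lt_iff_succ_le, ← not_le]
    simpa [J] using hk
  have hgap : |μ (σ i.succ) - μ (σ i.castSucc)| ≤ |μ (σ a) - μ k| := by
    simpa using hσ.abs_sub_le_abs_sub (mem_Iic.1 ha) (Fin.castSucc_lt_succ (i := i)).le hk'
  rw [hsum]
  exact (mul_le_mul_of_nonneg_left hgap (norm_nonneg _)).trans hjk

/-- Key combinatorial matrix lemma: there is a constant C_m depending only on m
such that ‖Σ Sⱼ pⱼ‖ ≤ C_m K₁ K₂ ε whenever the Sⱼ are K₁-bounded and mutually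
K₁|μⱼ-μₖ|-close, the partial sums of the pⱼ over proper nonempty subsets J
satisfy ‖Σ_{j∈J} pⱼ‖ ≤ K₂ ε (min_{j∈J,k∉J}|μⱼ-μₖ|)⁻¹, and Σ pⱼ = 0. -/
theorem stmt_15 (m : ℕ) (hm : 1 ≤ m) :
    ∃ Cm : ℝ, 0 < Cm ∧
      ∀ (N : ℕ)
        (S p : Fin m → (EuclideanSpace ℂ (Fin N) →L[ℂ] EuclideanSpace ℂ (Fin N)))
        (μ : Fin m → ℝ) (K₁ K₂ ε : ℝ),
        0 < K₁ → 0 < K₂ → 0 < ε →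
        Function.Injective μ →
        (∀ j, ‖S j‖ ≤ K₁) →
        (∀ j k, ‖S j - S k‖ ≤ K₁ * |μ j - μ k|) →
        (∀ J : Finset (Fin m), J.Nonempty → J ≠ Finset.univ →
          ∃ j ∈ J, ∃ k, k ∉ J ∧ ‖∑ i ∈ J, p i‖ * |μ j - μ k| ≤ K₂ * ε) →
        (∑ j, p j = 0) →
        ‖∑ j, S j * p j‖ ≤ Cm * K₁ * K₂ * ε := by
  obtain ⟨n, rfl⟩ : ∃ n, m = n + 1 := ⟨m - 1, by omega⟩
  refine ⟨n + 1, by positivity, ?_⟩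
  intro N S p μ K₁ K₂ ε hK₁ hK₂ hε _ _ hSlip hJ hsum
  set σ := Tuple.sort μ
  have hpσ : ∑ i, p (σ i) = 0 := (Equiv.sum_comp σ p).trans hsum
  have hterm (i : Fin n) : ‖S (σ i.succ) - S (σ i.castSucc)‖ *
      ‖∑ j ∈ Iic i.castSucc, p (σ j)‖ ≤ K₁ * (K₂ * ε) :=
    calc _ ≤ K₁ * |μ (σ i.succ) - μ (σ i.castSucc)| * ‖∑ j ∈ Iic i.castSucc, p (σ j)‖ :=
          mul_le_mul_of_nonneg_right (hSlip _ _) (norm_nonneg _)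
      _ = K₁ * (‖∑ j ∈ Iic i.castSucc, p (σ j)‖ * |μ (σ i.succ) - μ (σ i.castSucc)|) := by ring
      _ ≤ K₁ * (K₂ * ε) :=
          mul_le_mul_of_nonneg_left (norm_sum_Iic_mul_gap_le σ (Tuple.monotone_sort μ) hJ i) hK₁.le
  rw [← Equiv.sum_comp σ (fun j => S j * p j)]
  calc _ ≤ n * (K₁ * (K₂ * ε)) := norm_sum_mul_le_of_sum_eq_zero (S ∘ σ) (p ∘ σ) hpσ hterm
    _ ≤ (n + 1) * K₁ * K₂ * ε := by
      have : 0 < K₁ * (K₂ * ε) := by positivity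
      nlinarith
end

section
/- If L(ξ̃) is hyperbolic in direction ν with |ν′| = 1, ν′ in the hyperbolicity cone Γ(ν), then the ball centered at ν′ of radius |p_N(ν′)|/K is contained in Γ(ν), where p_N(ξ̃) = det L(ξ̃) and K = max_{|ξ̃| ≤ 2} |∇ p_N(ξ̃)|. -/
/-!
By the mean value inequality, `‖p ξ - p ν'‖ ≤ K ‖ξ - ν'‖ < ‖p ν'‖` on the ball, so `p` does not
vanish there; the ball is connected and contains `ν'`, hence lies in the component `Γ(ν)` of `ν'`.
The bound `K` is only available on the ball of radius `2`, which contains the ball around `ν'`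
because `p 0 = 0` forces `‖p ν'‖ ≤ K ‖ν'‖ = K`. (For `N = 0` the determinant is identically `1`
and `Γ(ν)` is the whole space.)
-/

open Metric

theorem Differentiable.matrix_det {𝕜 E R n : Type*} [NontriviallyNormedField 𝕜]
    [NormedAddCommGroup E] [NormedSpace 𝕜 E] [NormedCommRing R] [NormedAlgebra 𝕜 R]
    [Fintype n] [DecidableEq n] {M : E → Matrix n n R}
    (hM : ∀ i j, Differentiable 𝕜 fun x => M x i j) :
    Differentiable 𝕜 fun x => (M x).det := by
  simp_rw [Matrix.det_apply']
  fun_prop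

theorem differentiable_det_pencil {ι n : Type*} [Fintype ι] [Fintype n] [DecidableEq n]
    (A : ι → Matrix n n ℂ) :
    Differentiable ℝ fun ξ : EuclideanSpace ℝ ι => Matrix.det (∑ j, ((ξ j : ℝ) : ℂ) • A j) := by
  refine Differentiable.matrix_det fun i k => ?_
  simp only [Matrix.sum_apply, Matrix.smul_apply, smul_eq_mul]
  fun_prop

section MeanValue

variable {E F : Type*} [NormedAddCommGroup E] [NormedSpace ℝ E]
  [NormedAddCommGroup F] [NormedSpace ℝ F] {f : E → F} {K : ℝ}

theorem ball_norm_div_subset_ne_zero {s : Set E} {x : E} (hs : Convex ℝ s)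
    (hf : ∀ y ∈ s, DifferentiableAt ℝ f y) (hK : ∀ y ∈ s, ‖fderiv ℝ f y‖ ≤ K)
    (hball : ball x (‖f x‖ / K) ⊆ s) :
    ball x (‖f x‖ / K) ⊆ {y | f y ≠ 0} := by
  intro y hy hfy
  have hr : 0 < ‖f x‖ / K := pos_of_mem_ball hy
  have hK0 : 0 < K := by
    rcases div_pos_iff.mp hr with ⟨-, hK0⟩ | ⟨hneg, -⟩
    · exact hK0
    · exact absurd hneg (norm_nonneg _).not_gt
  have hlip : ‖f y - f x‖ ≤ K * ‖y - x‖ :=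
    hs.norm_image_sub_le_of_norm_fderiv_le hf hK (hball (mem_ball_self hr)) (hball hy)
  have hdist : dist y x * K < ‖f x‖ := (lt_div_iff₀ hK0).mp hy
  rw [hfy, zero_sub, norm_neg, ← dist_eq_norm] at hlip
  linarith

theorem ball_norm_div_subset_closedBall {x : E}
    (hf : ∀ y ∈ closedBall (0 : E) (2 * ‖x‖), DifferentiableAt ℝ f y)
    (hK : ∀ y ∈ closedBall (0 : E) (2 * ‖x‖), ‖fderiv ℝ f y‖ ≤ K) (hf0 : f 0 = 0) :
    ball x (‖f x‖ / K) ⊆ closedBall 0 (2 * ‖x‖) := by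
  have h0 : (0 : E) ∈ closedBall 0 (2 * ‖x‖) := mem_closedBall_self (by positivity)
  have hx : x ∈ closedBall (0 : E) (2 * ‖x‖) := by
    rw [mem_closedBall_zero_iff]; linarith [norm_nonneg x]
  have hfx : ‖f x‖ ≤ K * ‖x‖ := by
    simpa [hf0] using (convex_closedBall (0 : E) _).norm_image_sub_le_of_norm_fderiv_le hf hK h0 hx
  have hr : ‖f x‖ / K ≤ ‖x‖ :=
    div_le_of_le_mul₀ ((norm_nonneg _).trans (hK 0 h0)) (norm_nonneg _) (by linarith)
  intro y hy
  rw [mem_closedBall_zero_iff]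
  calc ‖y‖ ≤ ‖x‖ + dist y x := by rw [dist_eq_norm]; exact norm_le_insert' y x
    _ ≤ 2 * ‖x‖ := by linarith [mem_ball.mp hy]

end MeanValue

theorem stmt_16_general (d N : ℕ) (A : Fin (d + 1) → Matrix (Fin N) (Fin N) ℂ)
    (p : EuclideanSpace ℝ (Fin (d + 1)) → ℂ)
    (hp : ∀ ξ, p ξ = Matrix.det (∑ j, ((ξ j : ℝ) : ℂ) • A j))
    (ν ν' : EuclideanSpace ℝ (Fin (d + 1)))
    (K : ℝ)
    (hK : ∀ ξ : EuclideanSpace ℝ (Fin (d + 1)), ‖ξ‖ ≤ 2 → ‖fderiv ℝ p ξ‖ ≤ K)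
    (hν' : ν' ∈ connectedComponentIn {ξ | p ξ ≠ 0} ν)
    (hν'1 : ‖ν'‖ = 1) :
    Metric.ball ν' (‖p ν'‖ / K) ⊆ connectedComponentIn {ξ | p ξ ≠ 0} ν := by
  rcases Nat.eq_zero_or_pos N with rfl | hN
  · have huniv : {ξ : EuclideanSpace ℝ (Fin (d + 1)) | p ξ ≠ 0} = Set.univ := by
      ext ξ; simp [hp]
    rw [huniv, connectedComponentIn_univ, PreconnectedSpace.connectedComponent_eq_univ]
    exact Set.subset_univ _
  have : Nonempty (Fin N) := ⟨⟨0, hN⟩⟩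
  have hdiff : Differentiable ℝ p := by
    rw [funext hp]; exact differentiable_det_pencil A
  have hp0 : p 0 = 0 := by simp [hp]
  have hK' : ∀ ξ ∈ closedBall (0 : EuclideanSpace ℝ (Fin (d + 1))) (2 * ‖ν'‖),
      ‖fderiv ℝ p ξ‖ ≤ K := fun ξ hξ => hK ξ (by simpa [hν'1] using hξ)
  have hball := ball_norm_div_subset_closedBall (fun y _ => hdiff y) hK' hp0
  have hne := ball_norm_div_subset_ne_zero (convex_closedBall _ _) (fun y _ => hdiff y) hK' hball
  intro ξ hξ
  rw [connectedComponentIn_eq hν']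
  exact (convex_ball ν' _).isPreconnected.subset_connectedComponentIn
    (mem_ball_self (pos_of_mem_ball hξ)) hne hξ

/-- If L is hyperbolic in the direction ν and ν' belongs to the hyperbolicity cone
Γ(ν) with |ν'| = 1, then the ball of radius |det L(ν')|/K around ν' is contained
in Γ(ν), where K bounds |∇ det L| on the ball of radius 2. -/
theorem stmt_16 (d N : ℕ) (A : Fin (d + 1) → Matrix (Fin N) (Fin N) ℂ)
    (p : EuclideanSpace ℝ (Fin (d + 1)) → ℂ)
    (hp : ∀ ξ, p ξ = Matrix.det (∑ j, ((ξ j : ℝ) : ℂ) • A j))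
    (ν ν' : EuclideanSpace ℝ (Fin (d + 1)))
    (hνhyp : p ν ≠ 0 ∧
      ∀ ξ : EuclideanSpace ℝ (Fin (d + 1)), ∀ τ : ℂ,
        Matrix.det (∑ j, (((ξ j : ℝ) : ℂ) + τ * ((ν j : ℝ) : ℂ)) • A j) = 0 →
        τ.im = 0)
    (K : ℝ) (hK0 : 0 < K)
    (hK : ∀ ξ : EuclideanSpace ℝ (Fin (d + 1)), ‖ξ‖ ≤ 2 → ‖fderiv ℝ p ξ‖ ≤ K)
    (hν' : ν' ∈ connectedComponentIn {ξ | p ξ ≠ 0} ν)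
    (hν'1 : ‖ν'‖ = 1) :
    Metric.ball ν' (‖p ν'‖ / K) ⊆ connectedComponentIn {ξ | p ξ ≠ 0} ν :=
  stmt_16_general d N A p hp ν ν' K hK hν' hν'1
end
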